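/- arXiv:1606.05287 — 11 statements merged into one kernel-verified Lean document; each statement's English description precedes it below -/
import Mathlib

section
/- If f : ℝ → ℂ is almost automorphic and f(x) → 0 as x → +∞, then f is identically zero. -/
open Filter MeasureTheory

/-- A continuous function `f : ℝ → ℂ` is almost automorphic if for every sequence of reals
there is a subsequence along which the translates converge pointwise to some `g`, and the
back-translates of `g` converge pointwise to `f`. -/
def AlmostAutomorphic (f : ℝ → ℂ) : Prop :=
  Continuous f ∧ ∀ s : ℕ → ℝ, ∃ σ : ℕ → ℕ, StrictMono σ ∧ ∃ g : ℝ → ℂ,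
    (∀ x : ℝ, Tendsto (fun k => f (x + s (σ k))) atTop (nhds (g x))) ∧
    (∀ x : ℝ, Tendsto (fun k => g (x - s (σ k))) atTop (nhds (f x)))

open Topology

theorem Filter.Tendsto.comp_add_of_tendsto_atTop {E : Type*} [TopologicalSpace E] {f : ℝ → E}
    {c : E} (hf : Tendsto f atTop (𝓝 c)) {t : ℕ → ℝ} (ht : Tendsto t atTop atTop) (x : ℝ) :
    Tendsto (fun k => f (x + t k)) atTop (𝓝 c) :=
  hf.comp (tendsto_atTop_add_const_left _ x ht)

/-- Translating along the integers, the limit function `g` of the definition is constant `c`;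
translating back, so is `f`. -/
theorem AlmostAutomorphic.eq_of_tendsto_atTop {f : ℝ → ℂ} (hf : AlmostAutomorphic f) {c : ℂ}
    (hc : Tendsto f atTop (𝓝 c)) (x : ℝ) : f x = c := by
  obtain ⟨σ, hσ, g, hfg, hgf⟩ := hf.2 (fun n => n)
  have hσ_atTop : Tendsto (fun k => (σ k : ℝ)) atTop atTop :=
    tendsto_natCast_atTop_atTop.comp hσ.tendsto_atTop
  have hg : ∀ y, g y = c := fun y =>
    tendsto_nhds_unique (hfg y) (hc.comp_add_of_tendsto_atTop hσ_atTop y)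
  simp only [hg] at hgf
  exact tendsto_nhds_unique (hgf x) tendsto_const_nhds

/-- If an almost automorphic function tends to zero at plus infinity, it vanishes identically. -/
theorem almostAutomorphic_eq_zero_of_tendsto_zero (f : ℝ → ℂ)
    (hf : AlmostAutomorphic f)
    (h0 : Tendsto f atTop (nhds 0)) :
    ∀ x : ℝ, f x = 0 :=
  hf.eq_of_tendsto_atTop h0
end

section
/- If f : ℝ → ℂ is almost automorphic and g ∈ L¹(ℝ), then the convolution f ∗ g, defined by (f ∗ g)(x) = ∫_ℝ f(x − y) g(y) dy, is almost automorphic. -/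
/-!
An almost automorphic function is bounded, and so is the pointwise limit of its translates along
any sequence. Hence every translate-and-limit step in the definition can be pushed through the
integral against `g ∈ L¹` by dominated convergence, with dominating function `M ‖g‖`; the same
argument with the filter `𝓝 x₀` in place of a sequence gives continuity of `f ∗ g`.
-/

open Filter MeasureTheory

open Topology

theorem tendsto_integral_mul_of_tendsto_of_norm_le {α ι 𝕜 : Type*} [MeasurableSpace α]
    {μ : Measure α} [RCLike 𝕜] {l : Filter ι} [l.IsCountablyGenerated] {F : ι → α → 𝕜}
    {G g : α → 𝕜} {M : ℝ} (hg : Integrable g μ)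
    (hF_meas : ∀ᶠ i in l, AEStronglyMeasurable (F i) μ) (hF_le : ∀ i x, ‖F i x‖ ≤ M)
    (hFG : ∀ x, Tendsto (fun i => F i x) l (𝓝 (G x))) :
    Tendsto (fun i => ∫ x, F i x * g x ∂μ) l (𝓝 (∫ x, G x * g x ∂μ)) :=
  tendsto_integral_filter_of_dominated_convergence (fun x => M * ‖g x‖)
    (hF_meas.mono fun _ hi => hi.mul hg.aestronglyMeasurable)
    (Eventually.of_forall fun i => Eventually.of_forall fun x => by
      rw [norm_mul]
      exact mul_le_mul_of_nonneg_right (hF_le i x) (norm_nonneg _))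
    (hg.norm.const_mul M) (Eventually.of_forall fun x => (hFG x).mul tendsto_const_nhds)

theorem measurable_of_tendsto_comp_add {f h : ℝ → ℂ} {s : ℕ → ℝ} (hf : Continuous f)
    (hfh : ∀ x, Tendsto (fun k => f (x + s k)) atTop (𝓝 (h x))) : Measurable h :=
  measurable_of_tendsto_metrizable (fun k => (hf.comp (continuous_add_const (s k))).measurable)
    (tendsto_pi_nhds.2 hfh)

namespace AlmostAutomorphic

theorem exists_norm_le {f : ℝ → ℂ} (hf : AlmostAutomorphic f) : ∃ M, ∀ x, ‖f x‖ ≤ M := by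
  by_contra! hunbdd
  choose s hs using fun n : ℕ => hunbdd n
  obtain ⟨σ, hσ, h, hfh, -⟩ := hf.2 s
  have hlim : Tendsto (fun k => ‖f (0 + s (σ k))‖) atTop (𝓝 ‖h 0‖) := (hfh 0).norm
  have hinfty : Tendsto (fun k => ‖f (0 + s (σ k))‖) atTop atTop := by
    refine tendsto_atTop_mono (fun k => ?_) (tendsto_natCast_atTop_atTop.comp hσ.tendsto_atTop)
    simpa only [zero_add, Function.comp_apply] using (hs (σ k)).le
  exact not_tendsto_atTop_of_tendsto_nhds hlim hinfty

end AlmostAutomorphic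

/-- The convolution of an almost automorphic function with an integrable function is
almost automorphic. -/
theorem almostAutomorphic_convolution_integrable (f g : ℝ → ℂ)
    (hf : AlmostAutomorphic f)
    (hg : Integrable g) :
    AlmostAutomorphic (fun x => ∫ y : ℝ, f (x - y) * g y) := by
  obtain ⟨M, hM⟩ := hf.exists_norm_le
  have hf_meas (x : ℝ) : AEStronglyMeasurable (fun y => f (x - y)) volume :=
    (hf.1.comp (continuous_const.sub continuous_id)).aestronglyMeasurable
  refine ⟨continuous_iff_continuousAt.2 fun x₀ => ?_, fun s => ?_⟩
  · exact tendsto_integral_mul_of_tendsto_of_norm_le hg (Eventually.of_forall hf_meas)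
      (fun _ _ => hM _) fun y => (hf.1.tendsto _).comp (tendsto_id.sub_const y)
  obtain ⟨σ, hσ, h, hfh, hhf⟩ := hf.2 s
  have hhM (z : ℝ) : ‖h z‖ ≤ M := le_of_tendsto (hfh z).norm (Eventually.of_forall fun _ => hM _)
  have hh_meas : Measurable h := measurable_of_tendsto_comp_add hf.1 hfh
  refine ⟨σ, hσ, fun x => ∫ y, h (x - y) * g y, fun x => ?_, fun x => ?_⟩
  · refine tendsto_integral_mul_of_tendsto_of_norm_le hg (Eventually.of_forall fun _ => hf_meas _)
      (fun _ _ => hM _) fun y => ?_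
    simpa only [sub_add_eq_add_sub] using hfh (x - y)
  · refine tendsto_integral_mul_of_tendsto_of_norm_le hg (Eventually.of_forall fun _ =>
      (hh_meas.comp (measurable_const.sub measurable_id)).aestronglyMeasurable)
      (fun _ _ => hhM _) fun y => ?_
    simpa only [sub_right_comm] using hhf (x - y)
end

section
/- (Bochner's double-limit criterion) A continuous function f : ℝ → ℂ is almost automorphic if and only if for every sequence (s_m) of real numbers one can extract a subsequence (s_{m_k}) such that for every x ∈ ℝ the iterated limit lim_{l→∞} lim_{k→∞} f(x + s_{m_k} − s_{m_l}) exists and equals f(x) (that is, for each l and x the inner limit over k exists, and the resulting limit over l equals f(x)). -/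
/-!
Along a fixed subsequence `t`, the inner limit `lim_k f (x + t k - t l)` is just the limit
function `g x = lim_k f (x + t k)` evaluated at `x - t l`; conversely every inner limit is
a translate of the first one. So the double-limit condition is the second half of the
definition of almost automorphy, read along the same subsequence.
-/

open Filter MeasureTheory

open Topology

section TranslateLimits

variable {G X : Type*} [AddCommGroup G] [TopologicalSpace X] {f : G → X} {t : ℕ → G}

theorem tendsto_comp_add_sub_of_tendsto_comp_add {g : G → X}
    (hg : ∀ x, Tendsto (fun k => f (x + t k)) atTop (𝓝 (g x))) (l : ℕ) (x : G) :
    Tendsto (fun k => f (x + t k - t l)) atTop (𝓝 (g (x - t l))) := by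
  simpa only [add_sub_right_comm] using hg (x - t l)

theorem tendsto_comp_add_of_tendsto_comp_add_sub {F : ℕ → G → X}
    (hF : ∀ l x, Tendsto (fun k => f (x + t k - t l)) atTop (𝓝 (F l x))) (x : G) :
    Tendsto (fun k => f (x + t k)) atTop (𝓝 (F 0 (x + t 0))) := by
  simpa only [add_right_comm x, add_sub_cancel_right] using hF 0 (x + t 0)

theorem exists_translate_limits_iff_exists_double_limit [T2Space X] :
    (∃ g : G → X, (∀ x, Tendsto (fun k => f (x + t k)) atTop (𝓝 (g x))) ∧
        ∀ x, Tendsto (fun k => g (x - t k)) atTop (𝓝 (f x))) ↔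
      ∃ F : ℕ → G → X, (∀ l x, Tendsto (fun k => f (x + t k - t l)) atTop (𝓝 (F l x))) ∧
        ∀ x, Tendsto (fun l => F l x) atTop (𝓝 (f x)) := by
  constructor
  · rintro ⟨g, hg, hg_back⟩
    exact ⟨fun l x => g (x - t l), tendsto_comp_add_sub_of_tendsto_comp_add hg, hg_back⟩
  · rintro ⟨F, hF, hF_lim⟩
    set g : G → X := fun x => F 0 (x + t 0)
    have hg : ∀ x, Tendsto (fun k => f (x + t k)) atTop (𝓝 (g x)) :=
      tendsto_comp_add_of_tendsto_comp_add_sub hF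
    have hF_eq : ∀ l x, g (x - t l) = F l x := fun l x =>
      tendsto_nhds_unique (tendsto_comp_add_sub_of_tendsto_comp_add hg l x) (hF l x)
    exact ⟨g, hg, fun x => by simpa only [hF_eq] using hF_lim x⟩

end TranslateLimits

/-- Bochner's double-limit criterion: a continuous function f is almost automorphic iff from
every sequence of reals one can extract a subsequence along which, for every x, the inner
limit over k of f (x + s (σ k) - s (σ l)) exists and the resulting limit over l equals f x. -/
theorem almostAutomorphic_iff_double_limit (f : ℝ → ℂ) (hf : Continuous f) :
    AlmostAutomorphic f ↔
    ∀ s : ℕ → ℝ, ∃ σ : ℕ → ℕ, StrictMono σ ∧ ∃ F : ℕ → ℝ → ℂ,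
      (∀ l : ℕ, ∀ x : ℝ,
        Tendsto (fun k => f (x + s (σ k) - s (σ l))) atTop (nhds (F l x))) ∧
      (∀ x : ℝ, Tendsto (fun l => F l x) atTop (nhds (f x))) := by
  rw [AlmostAutomorphic, and_iff_right hf]
  exact forall_congr' fun s => exists_congr fun σ =>
    and_congr_right' (exists_translate_limits_iff_exists_double_limit (t := fun k => s (σ k)))
end

section
/- (Bohl–Bohr type theorem for almost automorphic functions) Let f : ℝ → ℂ be almost automorphic and let F : ℝ → ℂ be a primitive of f, i.e. F is differentiable on ℝ with F' = f. Then F is almost automorphic if and only if F is bounded on ℝ. -/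
open Filter MeasureTheory

/-!
A bounded primitive `F` of `f` inherits almost automorphy as follows. Along a subsequence,
`f(· + sₖ) → g`, `g(· - sₖ) → f` and `F(sₖ) → L`; dominated convergence then gives
`F(· + sₖ) → G := L + ∫₀ˣ g`, and, along a further subsequence, `G(· - sₖ) → F + c` for some
constant `c`. Iterating the round trip `F ↦ G ↦ F + c` keeps the sup-norm bound of `F`, so all
the functions `F + n c` are bounded by the same constant, forcing `c = 0`.
-/

open Topology

section

variable {E : Type*} [NormedAddCommGroup E]

theorem eq_zero_of_forall_norm_add_nsmul_le [NormedSpace ℝ E] {a c : E} {C : ℝ}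
    (h : ∀ n : ℕ, ‖a + n • c‖ ≤ C) : c = 0 := by
  by_contra hc
  obtain ⟨n, hn⟩ := exists_nat_gt ((C + ‖a‖) / ‖c‖)
  rw [div_lt_iff₀ (norm_pos_iff.2 hc)] at hn
  have : (n : ℝ) * ‖c‖ ≤ C + ‖a‖ := calc
    (n : ℝ) * ‖c‖ = ‖(a + n • c) - a‖ := by
      rw [add_sub_cancel_left, RCLike.norm_nsmul ℝ, nsmul_eq_mul]
    _ ≤ ‖a + n • c‖ + ‖a‖ := norm_sub_le _ _
    _ ≤ C + ‖a‖ := by linarith [h n]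
  linarith

theorem exists_subseq_tendsto_of_norm_le [ProperSpace E] {u : ℕ → E} {C : ℝ}
    (h : ∀ k, ‖u k‖ ≤ C) : ∃ a, ∃ φ : ℕ → ℕ, StrictMono φ ∧ Tendsto (u ∘ φ) atTop (𝓝 a) := by
  obtain ⟨a, -, φ, hφ, ha⟩ := tendsto_subseq_of_bounded (Metric.isBounded_closedBall (x := 0))
    fun k => mem_closedBall_zero_iff.2 (h k)
  exact ⟨a, φ, hφ, ha⟩

def TendstoTranslates (f : ℝ → E) (s : ℕ → ℝ) (g : ℝ → E) : Prop :=
  ∀ x, Tendsto (fun k => f (x + s k)) atTop (𝓝 (g x))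

namespace TendstoTranslates

variable {f g : ℝ → E} {s : ℕ → ℝ}

theorem comp_strictMono (h : TendstoTranslates f s g) {φ : ℕ → ℕ} (hφ : StrictMono φ) :
    TendstoTranslates f (s ∘ φ) g :=
  fun x => (h x).comp hφ.tendsto_atTop

theorem norm_le (h : TendstoTranslates f s g) {C : ℝ} (hC : ∀ x, ‖f x‖ ≤ C) (x : ℝ) :
    ‖g x‖ ≤ C :=
  le_of_tendsto' (h x).norm fun _ => hC _

theorem stronglyMeasurable (h : TendstoTranslates f s g) (hf : StronglyMeasurable f) :
    StronglyMeasurable g :=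
  stronglyMeasurable_of_tendsto atTop (fun k => hf.comp_measurable (measurable_add_const (s k)))
    (tendsto_pi_nhds.2 h)

variable [NormedSpace ℝ E]

theorem tendsto_intervalIntegral (h : TendstoTranslates f s g) (hf : StronglyMeasurable f)
    {M : ℝ} (hM : ∀ x, ‖f x‖ ≤ M) (a b : ℝ) :
    Tendsto (fun k => ∫ τ in a..b, f (τ + s k)) atTop (𝓝 (∫ τ in a..b, g τ)) :=
  intervalIntegral.tendsto_integral_filter_of_dominated_convergence (fun _ => M)
    (Eventually.of_forall fun k =>
      (hf.comp_measurable (measurable_add_const (s k))).aestronglyMeasurable)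
    (Eventually.of_forall fun _ => ae_of_all _ fun _ _ => hM _) intervalIntegrable_const
    (ae_of_all _ fun τ _ => h τ)

theorem primitive (h : TendstoTranslates f s g) (hf : StronglyMeasurable f) {M : ℝ}
    (hM : ∀ x, ‖f x‖ ≤ M) {F : ℝ → E} (hF : ∀ a b, ∫ τ in a..b, f τ = F b - F a) {L : E}
    (hL : Tendsto (fun k => F (s k)) atTop (𝓝 L)) :
    TendstoTranslates F s fun x => L + ∫ τ in 0..x, g τ := by
  intro x
  have hshift : ∀ k, F (x + s k) = F (s k) + ∫ τ in 0..x, f (τ + s k) := fun k => by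
    rw [intervalIntegral.integral_comp_add_right, zero_add, hF, add_sub_cancel]
  simpa only [hshift] using hL.add (h.tendsto_intervalIntegral hf hM 0 x)

theorem eq_zero_of_norm_le {F G : ℝ → E} {c : E} {C : ℝ} (hFG : TendstoTranslates F s G)
    (hGF : TendstoTranslates G (-s) fun x => F x + c) (hC : ∀ x, ‖F x‖ ≤ C) : c = 0 := by
  have hround : ∀ n : ℕ, ∀ x, ‖F x + n • c‖ ≤ C := by
    intro n
    induction n with
    | zero => simpa using hC
    | succ n ih =>
      have hG : ∀ x, ‖G x + n • c‖ ≤ C := fun x =>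
        le_of_tendsto' ((hFG x).add_const _).norm fun _ => ih _
      intro x
      rw [succ_nsmul', ← add_assoc]
      exact le_of_tendsto' ((hGF x).add_const _).norm fun _ => hG _
  exact eq_zero_of_forall_norm_add_nsmul_le (hround · 0)

end TendstoTranslates

theorem exists_subseq_tendstoTranslates_of_primitive [NormedSpace ℝ E] [ProperSpace E]
    {f g F : ℝ → E} {s : ℕ → ℝ} {M C : ℝ}
    (hf : StronglyMeasurable f) (hM : ∀ x, ‖f x‖ ≤ M) (hF : ∀ a b, ∫ τ in a..b, f τ = F b - F a)
    (hC : ∀ x, ‖F x‖ ≤ C) (hfg : TendstoTranslates f s g) (hgf : TendstoTranslates g (-s) f) :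
    ∃ φ : ℕ → ℕ, StrictMono φ ∧ ∃ G : ℝ → E,
      TendstoTranslates F (s ∘ φ) G ∧ TendstoTranslates G (-(s ∘ φ)) F := by
  have hg : StronglyMeasurable g := hfg.stronglyMeasurable hf
  have hgM : ∀ x, ‖g x‖ ≤ M := hfg.norm_le hM
  have hgi : ∀ a b, IntervalIntegrable g volume a b := fun a b =>
    (intervalIntegrable_const (c := M)).mono_fun hg.aestronglyMeasurable
      (ae_of_all _ fun x => (hgM x).trans (le_abs_self M))
  obtain ⟨L, φ, hφ, hL⟩ := exists_subseq_tendsto_of_norm_le fun k => hC (s k)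
  set G : ℝ → E := fun x => L + ∫ τ in 0..x, g τ
  have hG : ∀ a b, ∫ τ in a..b, g τ = G b - G a := fun a b => by
    rw [add_sub_add_left_eq_sub, intervalIntegral.integral_interval_sub_left (hgi 0 b) (hgi 0 a)]
  have hFG : TendstoTranslates F (s ∘ φ) G := (hfg.comp_strictMono hφ).primitive hf hM hF hL
  obtain ⟨P, ψ, hψ, hP⟩ := exists_subseq_tendsto_of_norm_le fun k => hFG.norm_le hC (-s (φ k))
  have hGF : TendstoTranslates G (-(s ∘ φ ∘ ψ)) fun x => F x + (P - F 0) := by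
    have hlim : (fun x => F x + (P - F 0)) = fun x => P + ∫ τ in 0..x, f τ :=
      funext fun x => by rw [hF]; abel
    rw [hlim]
    exact (hgf.comp_strictMono (hφ.comp hψ)).primitive hg hgM hG hP
  have hc : P - F 0 = 0 := (hFG.comp_strictMono hψ).eq_zero_of_norm_le hGF hC
  refine ⟨φ ∘ ψ, hφ.comp hψ, G, hFG.comp_strictMono hψ, ?_⟩
  simpa only [hc, add_zero] using hGF

end

theorem almostAutomorphic_iff {f : ℝ → ℂ} :
    AlmostAutomorphic f ↔ Continuous f ∧ ∀ s : ℕ → ℝ, ∃ σ : ℕ → ℕ, StrictMono σ ∧ ∃ g : ℝ → ℂ,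
      TendstoTranslates f (s ∘ σ) g ∧ TendstoTranslates g (-(s ∘ σ)) f := by
  simp only [AlmostAutomorphic, TendstoTranslates, Function.comp_apply, Pi.neg_apply,
    ← sub_eq_add_neg]

namespace AlmostAutomorphic

theorem exists_norm_le_s6 {F : ℝ → ℂ} (h : AlmostAutomorphic F) : ∃ C, ∀ x, ‖F x‖ ≤ C := by
  by_contra! hunbdd
  choose s hs using fun n : ℕ => hunbdd n
  obtain ⟨σ, hσ, g, hFg, -⟩ := h.2 s
  have hT : Tendsto (fun k => ‖F (s (σ k))‖) atTop atTop :=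
    tendsto_atTop_mono (fun k => (Nat.cast_le.2 hσ.le_apply).trans (hs (σ k)).le)
      tendsto_natCast_atTop_atTop
  exact not_tendsto_nhds_of_tendsto_atTop hT _ (by simpa using (hFg 0).norm)

theorem of_hasDerivAt_of_norm_le {f F : ℝ → ℂ} (hf : AlmostAutomorphic f)
    (hF : ∀ x, HasDerivAt F (f x) x) {C : ℝ} (hC : ∀ x, ‖F x‖ ≤ C) : AlmostAutomorphic F := by
  obtain ⟨M, hM⟩ := hf.exists_norm_le_s6
  have hFf : ∀ a b, ∫ τ in a..b, f τ = F b - F a := fun a b =>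
    intervalIntegral.integral_eq_sub_of_hasDerivAt (fun t _ => hF t) (hf.1.intervalIntegrable a b)
  refine almostAutomorphic_iff.2
    ⟨continuous_iff_continuousAt.2 fun x => (hF x).continuousAt, fun s => ?_⟩
  obtain ⟨σ, hσ, g, hfg, hgf⟩ := (almostAutomorphic_iff.1 hf).2 s
  obtain ⟨φ, hφ, G, hFG, hGF⟩ :=
    exists_subseq_tendstoTranslates_of_primitive hf.1.stronglyMeasurable hM hFf hC hfg hgf
  exact ⟨σ ∘ φ, hσ.comp hφ, G, hFG, hGF⟩

end AlmostAutomorphic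

/-- Bohl-Bohr type theorem: a primitive of an almost automorphic function is almost
automorphic if and only if it is bounded. -/
theorem almostAutomorphic_primitive_iff_bounded (f F : ℝ → ℂ)
    (hf : AlmostAutomorphic f)
    (hF : ∀ x : ℝ, HasDerivAt F (f x) x) :
    AlmostAutomorphic F ↔ ∃ C : ℝ, ∀ x : ℝ, ‖F x‖ ≤ C :=
  ⟨AlmostAutomorphic.exists_norm_le_s6, fun ⟨_, hC⟩ => hf.of_hasDerivAt_of_norm_le hF hC⟩
end

section
/- If f : ℝ → ℂ is infinitely differentiable, every derivative f^{(i)} (i ≥ 0) is bounded on ℝ, and f is almost automorphic, then every derivative f^{(i)} is almost automorphic; that is, B_aa = C_aa ∩ D_{L^∞}, where D_{L^∞} is the space of smooth functions with all derivatives bounded. -/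
open Filter MeasureTheory

/-- A smooth almost automorphic function: infinitely differentiable and every derivative
(including the function itself) is almost automorphic. -/
def SmoothAlmostAutomorphic (f : ℝ → ℂ) : Prop :=
  ContDiff ℝ (⊤ : ℕ∞) f ∧ ∀ i : ℕ, AlmostAutomorphic (iteratedDeriv i f)

/- ### Auxiliary lemmas -/

/-- Translating a Lipschitz function preserves the Lipschitz constant. -/
lemma aa_lip_shift {L : NNReal} {F : ℝ → ℂ} (h : LipschitzWith L F) (c : ℝ) :
    LipschitzWith L (fun x => F (x + c)) := fun x y => by
  simpa [edist_add_right] using h (x + c) (y + c)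

/-- A pointwise limit of `L`-Lipschitz functions is `L`-Lipschitz. -/
lemma aa_lip_of_tendsto {L : NNReal} (u : ℕ → ℝ → ℂ) (h : ℝ → ℂ)
    (hu : ∀ k, LipschitzWith L (u k))
    (hl : ∀ x, Tendsto (fun k => u k x) atTop (nhds (h x))) : LipschitzWith L h := by
  apply LipschitzWith.of_dist_le_mul
  intro x y
  refine le_of_tendsto ((hl x).dist (hl y)) (Eventually.of_forall fun k => ?_)
  exact (hu k).dist_le_mul x y

/-- Extraction of a pointwise convergent subsequence from a uniformly bounded,
equi-Lipschitz sequence of functions ℝ → ℂ. -/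
lemma aa_extract (u : ℕ → ℝ → ℂ) (C : ℝ) (L : NNReal)
    (hC : ∀ k x, ‖u k x‖ ≤ C) (hL : ∀ k, LipschitzWith L (u k)) :
    ∃ σ : ℕ → ℕ, StrictMono σ ∧ ∃ h : ℝ → ℂ,
      ∀ x, Tendsto (fun k => u (σ k) x) atTop (nhds (h x)) := by
  have hcompact : IsSeqCompact (Set.univ.pi fun _ : ℚ => Metric.closedBall (0 : ℂ) C) :=
    (isCompact_univ_pi fun _ => isCompact_closedBall 0 C).isSeqCompact
  have hmem : ∀ k, (fun q : ℚ => u k (q : ℝ)) ∈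
      Set.univ.pi fun _ : ℚ => Metric.closedBall (0 : ℂ) C := by
    intro k q _
    simpa [Metric.mem_closedBall, dist_eq_norm] using hC k (q : ℝ)
  obtain ⟨w0, -, φ, hφ, hconv⟩ := hcompact hmem
  have hptq : ∀ q : ℚ, Tendsto (fun k => u (φ k) (q : ℝ)) atTop (nhds (w0 q)) :=
    fun q => tendsto_pi_nhds.1 hconv q
  have key : ∀ x : ℝ, ∃ z, Tendsto (fun k => u (φ k) x) atTop (nhds z) := by
    intro x
    have hcauchy : CauchySeq (fun k => u (φ k) x) := by
      rw [Metric.cauchySeq_iff]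
      intro ε hε
      have hL1 : (0 : ℝ) < (L : ℝ) + 1 := by positivity
      obtain ⟨q, hq⟩ := exists_rat_near x (show (0 : ℝ) < ε / (4 * ((L : ℝ) + 1)) by positivity)
      have hcs : CauchySeq (fun k => u (φ k) (q : ℝ)) := (hptq q).cauchySeq
      rw [Metric.cauchySeq_iff] at hcs
      obtain ⟨N, hN⟩ := hcs (ε / 2) (by positivity)
      refine ⟨N, fun m hm n hn => ?_⟩
      have hd : dist x (q : ℝ) < ε / (4 * ((L : ℝ) + 1)) := by rw [Real.dist_eq]; exact hq
      have hLd : (L : ℝ) * dist x (q : ℝ) < ε / 4 := by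
        have h1 : (L : ℝ) * dist x (q : ℝ) ≤ ((L : ℝ) + 1) * dist x (q : ℝ) := by
          nlinarith [dist_nonneg (x := x) (y := (q : ℝ))]
        have h2 : ((L : ℝ) + 1) * dist x (q : ℝ) < ((L : ℝ) + 1) * (ε / (4 * ((L : ℝ) + 1))) :=
          mul_lt_mul_of_pos_left hd hL1
        have h3 : ((L : ℝ) + 1) * (ε / (4 * ((L : ℝ) + 1))) = ε / 4 := by field_simp
        linarith
      have d1 : dist (u (φ m) x) (u (φ m) (q : ℝ)) ≤ (L : ℝ) * dist x (q : ℝ) :=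
        (hL (φ m)).dist_le_mul x (q : ℝ)
      have d2 : dist (u (φ n) (q : ℝ)) (u (φ n) x) ≤ (L : ℝ) * dist x (q : ℝ) := by
        simpa [dist_comm] using (hL (φ n)).dist_le_mul x (q : ℝ)
      have d3 : dist (u (φ m) (q : ℝ)) (u (φ n) (q : ℝ)) < ε / 2 := hN m hm n hn
      calc dist (u (φ m) x) (u (φ n) x)
          ≤ dist (u (φ m) x) (u (φ m) (q : ℝ)) + dist (u (φ m) (q : ℝ)) (u (φ n) (q : ℝ))
            + dist (u (φ n) (q : ℝ)) (u (φ n) x) := dist_triangle4 _ _ _ _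
        _ < ε := by linarith
    exact cauchySeq_tendsto_of_complete hcauchy
  choose h hh using key
  exact ⟨φ, hφ, h, hh⟩

/-- Simultaneous extraction for finitely many sequences of functions. -/
lemma aa_multi_extract (n : ℕ) (F : ℕ → ℕ → ℝ → ℂ) (C : ℕ → ℝ) (L : ℕ → NNReal)
    (hC : ∀ j ≤ n, ∀ k x, ‖F j k x‖ ≤ C j)
    (hL : ∀ j ≤ n, ∀ k, LipschitzWith (L j) (F j k)) :
    ∃ σ : ℕ → ℕ, StrictMono σ ∧ ∃ h : ℕ → ℝ → ℂ,
      ∀ j ≤ n, ∀ x, Tendsto (fun k => F j (σ k) x) atTop (nhds (h j x)) := by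
  induction n with
  | zero =>
      obtain ⟨σ, hσ, h0, hh0⟩ := aa_extract (F 0) (C 0) (L 0)
        (fun k x => hC 0 le_rfl k x) (fun k => hL 0 le_rfl k)
      refine ⟨σ, hσ, fun _ => h0, ?_⟩
      intro j hj x
      interval_cases j
      exact hh0 x
  | succ n ih =>
      obtain ⟨σ, hσ, h, hh⟩ := ih
        (fun j hj k x => hC j (hj.trans (Nat.le_succ n)) k x)
        (fun j hj k => hL j (hj.trans (Nat.le_succ n)) k)
      obtain ⟨τ, hτ, h', hh'⟩ := aa_extract (fun k => F (n + 1) (σ k)) (C (n + 1)) (L (n + 1))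
        (fun k x => hC (n + 1) le_rfl (σ k) x) (fun k => hL (n + 1) le_rfl (σ k))
      refine ⟨σ ∘ τ, hσ.comp hτ, fun j => if j = n + 1 then h' else h j, ?_⟩
      intro j hj x
      rcases Nat.eq_or_lt_of_le hj with hj' | hj'
      · simpa [hj'] using hh' x
      · have hjn : j ≤ n := Nat.lt_succ_iff.1 hj'
        have : j ≠ n + 1 := by omega
        simpa [this, Function.comp_def] using (hh j hjn x).comp hτ.tendsto_atTop

/-- Passing derivative relations through pointwise limits of translates, using FTC
and dominated convergence. -/
lemma aa_lim_hasDerivAt (p q : ℝ → ℂ) (hd : ∀ x, HasDerivAt p (q x) x)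
    (hqc : Continuous q) (Cq : ℝ) (hCq : ∀ x, ‖q x‖ ≤ Cq)
    (a : ℕ → ℝ) (P Q : ℝ → ℂ) (hQc : Continuous Q)
    (hP : ∀ x, Tendsto (fun k => p (x + a k)) atTop (nhds (P x)))
    (hQ : ∀ x, Tendsto (fun k => q (x + a k)) atTop (nhds (Q x))) :
    ∀ x, HasDerivAt P (Q x) x := by
  have key : ∀ x, P x = P 0 + ∫ t in (0 : ℝ)..x, Q t := by
    intro x
    have h1 : ∀ k, p (x + a k) = p (0 + a k) + ∫ t in (0 : ℝ)..x, q (t + a k) := by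
      intro k
      have hderiv : ∀ t ∈ Set.uIcc (0 : ℝ) x,
          HasDerivAt (fun t => p (t + a k)) (q (t + a k)) t :=
        fun t _ => HasDerivAt.comp_add_const t (a k) (hd (t + a k))
      have hint : IntervalIntegrable (fun t => q (t + a k)) volume 0 x :=
        (hqc.comp (continuous_id.add continuous_const)).intervalIntegrable 0 x
      have := intervalIntegral.integral_eq_sub_of_hasDerivAt hderiv hint
      rw [this]; ring
    have h2 : Tendsto (fun k => ∫ t in (0 : ℝ)..x, q (t + a k)) atTop
        (nhds (∫ t in (0 : ℝ)..x, Q t)) := by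
      apply intervalIntegral.tendsto_integral_filter_of_dominated_convergence (fun _ => Cq)
      · exact Eventually.of_forall fun k =>
          ((hqc.comp (continuous_id.add continuous_const)).aestronglyMeasurable).restrict
      · exact Eventually.of_forall fun k => ae_of_all _ fun t _ => hCq (t + a k)
      · exact intervalIntegrable_const
      · exact ae_of_all _ fun t _ => hQ t
    have h3 : Tendsto (fun k => p (0 + a k) + ∫ t in (0 : ℝ)..x, q (t + a k)) atTop
        (nhds (P 0 + ∫ t in (0 : ℝ)..x, Q t)) := (hP 0).add h2
    have h4 : Tendsto (fun k => p (x + a k)) atTop (nhds (P 0 + ∫ t in (0 : ℝ)..x, Q t)) := by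
      refine h3.congr fun k => (h1 k).symm
    exact tendsto_nhds_unique (hP x) h4
  intro x
  have hInt : HasDerivAt (fun y => ∫ t in (0 : ℝ)..y, Q t) (Q x) x :=
    intervalIntegral.integral_hasDerivAt_right (hQc.intervalIntegrable 0 x)
      (hQc.stronglyMeasurableAtFilter _ _) hQc.continuousAt
  have : HasDerivAt (fun y => P 0 + ∫ t in (0 : ℝ)..y, Q t) (Q x) x := hInt.const_add (P 0)
  rwa [show P = fun y => P 0 + ∫ t in (0 : ℝ)..y, Q t from funext key]

/-- If f is infinitely differentiable with all derivatives bounded and f is almost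
automorphic, then every derivative of f is almost automorphic; i.e. a smooth function with
all derivatives bounded which is almost automorphic is a smooth almost automorphic function. -/
theorem smoothAlmostAutomorphic_of_almostAutomorphic_of_derivs_bounded (f : ℝ → ℂ)
    (hsmooth : ContDiff ℝ (⊤ : ℕ∞) f)
    (hbdd : ∀ i : ℕ, ∃ C : ℝ, ∀ x : ℝ, ‖iteratedDeriv i f x‖ ≤ C)
    (haa : AlmostAutomorphic f) :
    ∀ i : ℕ, AlmostAutomorphic (iteratedDeriv i f) := by
  choose Cb hCb using hbdd
  have hdiff : ∀ j : ℕ, Differentiable ℝ (iteratedDeriv j f) := by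
    intro j
    exact hsmooth.differentiable_iteratedDeriv j (by exact_mod_cast lt_top_iff_ne_top.2 (by simp))
  have hcont : ∀ j, Continuous (iteratedDeriv j f) := fun j => (hdiff j).continuous
  have hder : ∀ j x, HasDerivAt (iteratedDeriv j f) (iteratedDeriv (j + 1) f x) x := by
    intro j x
    rw [iteratedDeriv_succ]
    exact ((hdiff j) x).hasDerivAt
  have hlip : ∀ j, LipschitzWith (Real.toNNReal (Cb (j + 1))) (iteratedDeriv j f) := by
    intro j
    apply lipschitzWith_of_nnnorm_deriv_le (hdiff j)
    intro x
    rw [← iteratedDeriv_succ, ← norm_toNNReal]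
    exact Real.toNNReal_mono (hCb (j + 1) x)
  intro i
  refine ⟨hcont i, ?_⟩
  intro s
  obtain ⟨σ₀, hσ₀, g, hg1, hg2⟩ := haa.2 s
  -- forward extraction
  obtain ⟨τ, hτ, h, hh⟩ := aa_multi_extract i
    (fun j k x => iteratedDeriv j f (x + s (σ₀ k))) (fun j => Cb j)
    (fun j => Real.toNNReal (Cb (j + 1)))
    (fun j _ k x => hCb j _) (fun j _ k => aa_lip_shift (hlip j) _)
  have hhC : ∀ j ≤ i, ∀ x, ‖h j x‖ ≤ Cb j := fun j hj x =>
    le_of_tendsto ((hh j hj x).norm) (Eventually.of_forall fun k => hCb j _)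
  have hhlip : ∀ j ≤ i, LipschitzWith (Real.toNNReal (Cb (j + 1))) (h j) := fun j hj =>
    aa_lip_of_tendsto _ _ (fun k => aa_lip_shift (hlip j) _) (hh j hj)
  have hhcont : ∀ j ≤ i, Continuous (h j) := fun j hj => (hhlip j hj).continuous
  have hhder : ∀ j, j + 1 ≤ i → ∀ x, HasDerivAt (h j) (h (j + 1) x) x := by
    intro j hj
    exact aa_lim_hasDerivAt (iteratedDeriv j f) (iteratedDeriv (j + 1) f) (hder j)
      (hcont (j + 1)) (Cb (j + 1)) (hCb (j + 1)) (fun k => s (σ₀ (τ k)))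
      (h j) (h (j + 1)) (hhcont (j + 1) hj)
      (fun x => hh j ((Nat.le_succ j).trans hj) x) (fun x => hh (j + 1) hj x)
  -- backward extraction
  obtain ⟨ρ, hρ, w, hw⟩ := aa_multi_extract i
    (fun j k x => h j (x + -(s (σ₀ (τ k))))) (fun j => Cb j)
    (fun j => Real.toNNReal (Cb (j + 1)))
    (fun j hj k x => hhC j hj _) (fun j hj k => aa_lip_shift (hhlip j hj) _)
  have h0g : h 0 = g := funext fun x =>
    tendsto_nhds_unique (hh 0 (Nat.zero_le i) x) ((hg1 x).comp hτ.tendsto_atTop)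
  have hw0 : w 0 = f := by
    funext x
    refine tendsto_nhds_unique ?_ ((hg2 x).comp ((hτ.comp hρ).tendsto_atTop))
    have := hw 0 (Nat.zero_le i) x
    rw [h0g] at this
    refine this.congr fun k => by simp [Function.comp, sub_eq_add_neg]
  have hwlip : ∀ j ≤ i, LipschitzWith (Real.toNNReal (Cb (j + 1))) (w j) := fun j hj =>
    aa_lip_of_tendsto _ _ (fun k => aa_lip_shift (hhlip j hj) _) (hw j hj)
  have hwcont : ∀ j ≤ i, Continuous (w j) := fun j hj => (hwlip j hj).continuous
  have hwder : ∀ j, j + 1 ≤ i → ∀ x, HasDerivAt (w j) (w (j + 1) x) x := by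
    intro j hj
    exact aa_lim_hasDerivAt (h j) (h (j + 1)) (hhder j hj) (hhcont (j + 1) hj)
      (Cb (j + 1)) (hhC (j + 1) hj) (fun k => -(s (σ₀ (τ (ρ k)))))
      (w j) (w (j + 1)) (hwcont (j + 1) hj)
      (fun x => hw j ((Nat.le_succ j).trans hj) x) (fun x => hw (j + 1) hj x)
  have hwj : ∀ j ≤ i, w j = iteratedDeriv j f := by
    intro j
    induction j with
    | zero => intro _; simpa using hw0
    | succ j ih =>
        intro hj
        funext x
        rw [iteratedDeriv_succ, ← ih ((Nat.le_succ j).trans hj)]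
        exact ((hwder j hj x).deriv).symm
  refine ⟨fun k => σ₀ (τ (ρ k)), hσ₀.comp (hτ.comp hρ), h i, ?_, ?_⟩
  · intro x
    exact (hh i le_rfl x).comp hρ.tendsto_atTop
  · intro x
    have := hw i le_rfl x
    rw [hwj i le_rfl] at this
    refine this.congr fun k => by simp [Function.comp, sub_eq_add_neg]
end

section
/- (Bochner-type characterization of almost automorphic distributions, for bounded functions) Let f : ℝ → ℂ be bounded and measurable. Then f ∗ φ is almost automorphic for every φ ∈ D if and only if for every sequence (s_m) of real numbers one can extract a subsequence (s_{m_k}) such that for every φ ∈ D the iterated limit lim_{l→∞} lim_{k→∞} ∫_ℝ f(x + s_{m_k} − s_{m_l}) φ(x) dx exists and equals ∫_ℝ f(x) φ(x) dx. -/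
open Filter MeasureTheory Topology

/-- A test function: infinitely differentiable with compact support. -/
def IsTestFunction (φ : ℝ → ℂ) : Prop :=
  ContDiff ℝ (⊤ : ℕ∞) φ ∧ HasCompactSupport φ

private lemma aux_shift (f φ : ℝ → ℂ) (a b : ℝ) :
    (∫ x : ℝ, f (x + a - b) * φ x) = ∫ u : ℝ, f (u + a) * φ (u + b) := by
  have h : (fun x : ℝ => f (x + a - b) * φ x)
      = fun x : ℝ => (fun u : ℝ => f (u + a) * φ (u + b)) (x - b) := by
    funext x
    simp only []
    rw [show x - b + a = x + a - b by ring, show x - b + b = x by ring]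
  rw [h, integral_sub_right_eq_self (fun u : ℝ => f (u + a) * φ (u + b)) b]

private lemma aux_neg (f φ : ℝ → ℂ) (a : ℝ) :
    (∫ y : ℝ, f (a - y) * φ (-y)) = ∫ x : ℝ, f (x + a) * φ x := by
  have h : (fun y : ℝ => f (a - y) * φ (-y))
      = fun y : ℝ => (fun z : ℝ => f (z + a) * φ z) (-y) := by
    funext y; simp only []; rw [show -y + a = a - y by ring]
  rw [h, integral_neg_eq_self (fun z : ℝ => f (z + a) * φ z) volume]

private lemma aux_convshift (f φ : ℝ → ℂ) (w a : ℝ) :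
    (∫ x : ℝ, f (x + a) * φ (w - x)) = ∫ y : ℝ, f (w + a - y) * φ y := by
  have h : (fun x : ℝ => f (x + a) * φ (w - x))
      = fun x : ℝ => (fun y : ℝ => f (w + a - y) * φ y) (w - x) := by
    funext x; simp only []; rw [show w + a - (w - x) = x + a by ring]
  rw [h, integral_sub_left_eq_self (fun y : ℝ => f (w + a - y) * φ y) volume w]

/-- Bochner-type characterization of almost automorphic distributions, for bounded measurable
functions: f defines an almost automorphic distribution iff from every sequence of reals one
can extract a subsequence such that for every test function φ the iterated limit of the
translated pairings exists and returns the original pairing. -/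
theorem almostAutomorphicDistribution_iff_double_limit (f : ℝ → ℂ)
    (hmeas : Measurable f) (hbdd : ∃ C : ℝ, ∀ x : ℝ, ‖f x‖ ≤ C) :
    (∀ φ : ℝ → ℂ, IsTestFunction φ →
      AlmostAutomorphic (fun x => ∫ y : ℝ, f (x - y) * φ y)) ↔
    ∀ s : ℕ → ℝ, ∃ σ : ℕ → ℕ, StrictMono σ ∧
      ∀ φ : ℝ → ℂ, IsTestFunction φ → ∃ L : ℕ → ℂ,
        (∀ l : ℕ, Tendsto (fun k => ∫ x : ℝ, f (x + s (σ k) - s (σ l)) * φ x)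
          atTop (nhds (L l))) ∧
        Tendsto L atTop (nhds (∫ x : ℝ, f x * φ x)) := by
  obtain ⟨C₀, hC₀⟩ := hbdd
  obtain ⟨C, hC, hC0⟩ : ∃ C : ℝ, (∀ x, ‖f x‖ ≤ C) ∧ 0 ≤ C :=
    ⟨max C₀ 0, fun x => le_max_of_le_left (hC₀ x), le_max_right _ _⟩
  constructor
  · -- forward direction
    intro H s
    haveI : Fact ((1 : ENNReal) ≠ ⊤) := ⟨ENNReal.one_ne_top⟩
    obtain ⟨D, Dct, Ddense⟩ :=
      TopologicalSpace.exists_countable_dense (Lp ℂ 1 (volume : Measure ℝ))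
    obtain ⟨e, he⟩ := Set.Countable.exists_eq_range Dct Ddense.nonempty
    set Φ : ℝ → Lp ℂ 1 (volume : Measure ℝ) → ℂ :=
      fun t h => ∫ u : ℝ, f (u + t) * h u with hΦdef
    have hmf : ∀ t : ℝ, AEStronglyMeasurable (fun u : ℝ => f (u + t)) volume :=
      fun t => (hmeas.comp (measurable_add_const t)).aestronglyMeasurable
    have hint : ∀ (t : ℝ) (h : Lp ℂ 1 (volume : Measure ℝ)),
        Integrable (fun u => f (u + t) * h u) volume :=
      fun t h => (L1.integrable_coeFn h).bdd_mul (c := C) (hmf t) (Eventually.of_forall fun x => hC _)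
    have hΦd : ∀ (t : ℝ) (h h' : Lp ℂ 1 (volume : Measure ℝ)),
        ‖Φ t h - Φ t h'‖ ≤ C * ‖h - h'‖ := by
      intro t h h'
      have h1 : Φ t h - Φ t h' = ∫ u : ℝ, f (u + t) * ((h - h') u) := by
        rw [hΦdef]
        simp only []
        rw [← integral_sub (hint t h) (hint t h')]
        refine integral_congr_ae ?_
        filter_upwards [Lp.coeFn_sub h h'] with u hu
        rw [hu, Pi.sub_apply, mul_sub]
      rw [h1]
      calc ‖∫ u : ℝ, f (u + t) * ((h - h') u)‖
          ≤ ∫ u : ℝ, ‖f (u + t) * ((h - h') u)‖ := norm_integral_le_integral_norm _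
        _ ≤ ∫ u : ℝ, C * ‖(h - h') u‖ := by
            refine integral_mono_of_nonneg (Eventually.of_forall fun u => norm_nonneg _)
              (((L1.integrable_coeFn (h - h')).norm).const_mul C)
              (Eventually.of_forall fun u => ?_)
            simp only [norm_mul]
            exact mul_le_mul_of_nonneg_right (hC _) (norm_nonneg _)
        _ = C * ∫ u : ℝ, ‖(h - h') u‖ := integral_const_mul C _
        _ = C * ‖h - h'‖ := by rw [L1.norm_eq_integral_norm]
    have hΦn : ∀ (t : ℝ) (h : Lp ℂ 1 (volume : Measure ℝ)), ‖Φ t h‖ ≤ C * ‖h‖ := by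
      intro t h
      calc ‖Φ t h‖ = ‖∫ u : ℝ, f (u + t) * h u‖ := by rw [hΦdef]
        _ ≤ ∫ u : ℝ, ‖f (u + t) * h u‖ := norm_integral_le_integral_norm _
        _ ≤ ∫ u : ℝ, C * ‖h u‖ := by
            refine integral_mono_of_nonneg (Eventually.of_forall fun u => norm_nonneg _)
              (((L1.integrable_coeFn h).norm).const_mul C)
              (Eventually.of_forall fun u => ?_)
            simp only [norm_mul]
            exact mul_le_mul_of_nonneg_right (hC _) (norm_nonneg _)
        _ = C * ∫ u : ℝ, ‖h u‖ := integral_const_mul C _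
        _ = C * ‖h‖ := by rw [L1.norm_eq_integral_norm]
    have humem : ∀ k, (fun n => Φ (s k) (e n)) ∈
        Set.pi Set.univ (fun n : ℕ => Metric.closedBall (0 : ℂ) (C * ‖e n‖)) := by
      intro k
      rw [Set.mem_univ_pi]
      intro n
      simpa [mem_closedBall_zero_iff] using hΦn (s k) (e n)
    have hcomp : IsCompact (Set.pi Set.univ fun n : ℕ => Metric.closedBall (0 : ℂ) (C * ‖e n‖)) :=
      isCompact_univ_pi fun n => isCompact_closedBall _ _
    obtain ⟨x, -, σ, hσ, hconv⟩ := hcomp.isSeqCompact humem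
    have hpt : ∀ n, Tendsto (fun k => Φ (s (σ k)) (e n)) atTop (nhds (x n)) :=
      fun n => (tendsto_pi_nhds.1 hconv) n
    have hex : ∀ h : Lp ℂ 1 (volume : Measure ℝ),
        ∃ c : ℂ, Tendsto (fun k => Φ (s (σ k)) h) atTop (nhds c) := by
      intro h
      refine cauchySeq_tendsto_of_complete ?_
      rw [Metric.cauchySeq_iff]
      intro ε hε
      have hd : h ∈ closure D := Ddense h
      obtain ⟨d, hdD, hdist⟩ := Metric.mem_closure_iff.1 hd (ε / (3 * (C + 1)))
        (div_pos hε (by linarith))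
      rw [he] at hdD
      obtain ⟨n, rfl⟩ := hdD
      have hcs : CauchySeq (fun k => Φ (s (σ k)) (e n)) := (hpt n).cauchySeq
      rw [Metric.cauchySeq_iff] at hcs
      obtain ⟨N, hN⟩ := hcs (ε / 3) (by linarith)
      refine ⟨N, fun j hj i hi => ?_⟩
      have hne : C + 1 ≠ 0 := by linarith
      have hb1 : ∀ m : ℕ, dist (Φ (s (σ m)) h) (Φ (s (σ m)) (e n)) < ε / 3 := by
        intro m
        rw [dist_eq_norm]
        calc ‖Φ (s (σ m)) h - Φ (s (σ m)) (e n)‖ ≤ C * ‖h - e n‖ := hΦd _ _ _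
          _ ≤ (C + 1) * ‖h - e n‖ :=
              mul_le_mul_of_nonneg_right (by linarith) (norm_nonneg _)
          _ < (C + 1) * (ε / (3 * (C + 1))) := by
              refine mul_lt_mul_of_pos_left ?_ (by linarith)
              rw [← dist_eq_norm]
              exact hdist
          _ = ε / 3 := by field_simp
      calc dist (Φ (s (σ j)) h) (Φ (s (σ i)) h)
          ≤ dist (Φ (s (σ j)) h) (Φ (s (σ j)) (e n))
            + dist (Φ (s (σ j)) (e n)) (Φ (s (σ i)) (e n))
            + dist (Φ (s (σ i)) (e n)) (Φ (s (σ i)) h) := dist_triangle4 _ _ _ _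
        _ < ε / 3 + ε / 3 + ε / 3 := by
            refine add_lt_add (add_lt_add (hb1 j) (hN j hj i hi)) ?_
            rw [dist_comm]
            exact hb1 i
        _ = ε := by ring
    choose limf hlim using hex
    refine ⟨σ, hσ, ?_⟩
    intro φ hφ
    have hφc : Continuous φ := hφ.1.continuous
    have hintl : ∀ l : ℕ, Integrable (fun u : ℝ => φ (u + s (σ l))) volume := fun l =>
      (hφc.comp (continuous_add_right (s (σ l)))).integrable_of_hasCompactSupport
        (hφ.2.comp_isClosedEmbedding (Homeomorph.addRight (s (σ l))).isClosedEmbedding)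
    set hl : ℕ → Lp ℂ 1 (volume : Measure ℝ) := fun l =>
      MemLp.toLp _ (memLp_one_iff_integrable.2 (hintl l)) with hldef
    have hcoe : ∀ l : ℕ, (hl l : ℝ → ℂ) =ᵐ[volume] fun u => φ (u + s (σ l)) :=
      fun l => MemLp.coeFn_toLp _
    have hseq : ∀ l k : ℕ,
        (∫ x : ℝ, f (x + s (σ k) - s (σ l)) * φ x) = Φ (s (σ k)) (hl l) := by
      intro l k
      rw [aux_shift f φ (s (σ k)) (s (σ l)), hΦdef]
      refine integral_congr_ae ?_
      filter_upwards [hcoe l] with u hu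
      rw [hu]
    refine ⟨fun l => limf (hl l), fun l => ?_, ?_⟩
    · exact (hlim (hl l)).congr fun k => (hseq l k).symm
    · set P : ℝ → ℂ := fun a => ∫ x : ℝ, f (x + a) * φ x with hPdef
      have hAA : AlmostAutomorphic P := by
        have htest : IsTestFunction (fun y : ℝ => φ (-y)) :=
          ⟨hφ.1.comp contDiff_neg,
           hφ.2.comp_isClosedEmbedding (Homeomorph.neg ℝ).isClosedEmbedding⟩
        have h := H (fun y : ℝ => φ (-y)) htest
        have heq : (fun x : ℝ => ∫ y : ℝ, f (x - y) * φ (-y)) = P := by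
          funext a
          rw [hPdef]
          exact aux_neg f φ a
        rwa [heq] at h
      have hP0 : (∫ x : ℝ, f x * φ x) = P 0 := by
        rw [hPdef]
        refine integral_congr_ae (Eventually.of_forall fun x => ?_)
        simp only [add_zero]
      rw [hP0]
      refine tendsto_of_subseq_tendsto fun ns hns => ?_
      obtain ⟨τ, hτ, g, hg1, hg2⟩ := hAA.2 (fun j => s (σ (ns j)))
      refine ⟨τ, ?_⟩
      have key : ∀ j, limf (hl (ns (τ j))) = g (0 - s (σ (ns (τ j)))) := by
        intro j
        have h1 : Tendsto (fun m => Φ (s (σ (ns (τ m)))) (hl (ns (τ j)))) atTop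
            (nhds (limf (hl (ns (τ j))))) :=
          (hlim (hl (ns (τ j)))).comp (hns.comp hτ.tendsto_atTop)
        have h2 := hg1 (-(s (σ (ns (τ j)))))
        have h3 : Tendsto (fun m => P (-(s (σ (ns (τ j)))) + s (σ (ns (τ m))))) atTop
            (nhds (limf (hl (ns (τ j))))) := by
          refine h1.congr fun m => ?_
          rw [← hseq (ns (τ j)) (ns (τ m)), hPdef]
          refine integral_congr_ae (Eventually.of_forall fun z => ?_)
          simp only [show z + s (σ (ns (τ m))) - s (σ (ns (τ j)))
              = z + (-(s (σ (ns (τ j)))) + s (σ (ns (τ m)))) from by ring]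
        have h4 := tendsto_nhds_unique h3 h2
        rw [h4, zero_sub]
      exact Tendsto.congr (fun j => (key j).symm) (hg2 0)
  · -- backward direction
    intro H φ hφ
    obtain ⟨hφ1, hφ2⟩ := hφ
    have hφc : Continuous φ := hφ1.continuous
    set F : ℝ → ℂ := fun x => ∫ y : ℝ, f (x - y) * φ y with hFdef
    have hloc : LocallyIntegrable f volume := by
      rw [locallyIntegrable_iff]
      intro K hK
      exact Measure.integrableOn_of_bounded hK.measure_lt_top.ne hmeas.aestronglyMeasurable
        (Eventually.of_forall fun z => hC z)
    have hFcont : Continuous F := by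
      have hconv : F = convolution f φ (ContinuousLinearMap.mul ℝ ℂ) volume := by
        funext x
        rw [hFdef, convolution_def]
        simp only [ContinuousLinearMap.mul_apply']
        have h : (fun y : ℝ => f (x - y) * φ y)
            = fun y : ℝ => (fun t : ℝ => f t * φ (x - t)) (x - y) := by
          funext y; simp only []; rw [sub_sub_cancel]
        rw [h, integral_sub_left_eq_self (fun t : ℝ => f t * φ (x - t)) volume x]
      rw [hconv]
      exact hφ2.continuous_convolution_right (ContinuousLinearMap.mul ℝ ℂ) hloc hφc
    refine ⟨hFcont, ?_⟩
    intro s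
    obtain ⟨σ, hσ, hP⟩ := H s
    have htest : ∀ w : ℝ, IsTestFunction (fun z : ℝ => φ (w - z)) := fun w =>
      ⟨hφ1.comp (contDiff_const.sub contDiff_id),
       hφ2.comp_isClosedEmbedding (Homeomorph.subLeft w).isClosedEmbedding⟩
    have key : ∀ w : ℝ, ∃ L : ℕ → ℂ,
        (∀ l, Tendsto (fun k => F (w + (s (σ k) - s (σ l)))) atTop (nhds (L l))) ∧
        Tendsto L atTop (nhds (F w)) := by
      intro w
      obtain ⟨L, hLa, hLb⟩ := hP (fun z => φ (w - z)) (htest w)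
      have h0 : (∫ x : ℝ, f x * φ (w - x)) = F w := by
        rw [hFdef]
        have h := aux_convshift f φ w 0
        simp only [add_zero] at h
        exact h
      refine ⟨L, fun l => ?_, ?_⟩
      · refine (hLa l).congr fun k => ?_
        show (∫ x : ℝ, f (x + s (σ k) - s (σ l)) * φ (w - x)) = F (w + (s (σ k) - s (σ l)))
        rw [hFdef]
        have h1 : (∫ x : ℝ, f (x + s (σ k) - s (σ l)) * φ (w - x))
            = ∫ x : ℝ, f (x + (s (σ k) - s (σ l))) * φ (w - x) :=
          integral_congr_ae (Eventually.of_forall fun z => by simp only [add_sub_assoc])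
        rw [h1, aux_convshift f φ w (s (σ k) - s (σ l))]
      · rw [← h0]
        exact hLb
    choose Lf hLa hLb using key
    refine ⟨σ, hσ, fun x => Lf (x + s (σ 0)) 0, fun x => ?_, fun x => ?_⟩
    · refine (hLa (x + s (σ 0)) 0).congr fun k => ?_
      show F (x + s (σ 0) + (s (σ k) - s (σ 0))) = F (x + s (σ k))
      rw [show x + s (σ 0) + (s (σ k) - s (σ 0)) = x + s (σ k) by ring]
    · have huniq : ∀ l, Lf (x - s (σ l) + s (σ 0)) 0 = Lf x l := by
        intro l
        have h1 := (hLa (x - s (σ l) + s (σ 0)) 0).congr fun k =>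
          congrArg F (show x - s (σ l) + s (σ 0) + (s (σ k) - s (σ 0))
            = x + (s (σ k) - s (σ l)) by ring)
        exact tendsto_nhds_unique h1 (hLa x l)
      exact Tendsto.congr (fun l => (huniq l).symm) (hLb x)
end

section
/- If f : ℝ → ℂ is S¹-almost automorphic, then f is an almost automorphic distribution: for every infinitely differentiable compactly supported function φ : ℝ → ℂ the convolution f ∗ φ is almost automorphic. -/
open Filter MeasureTheory

/-- An S¹-almost automorphic function: locally integrable, and for every sequence of reals
there are a subsequence and a locally integrable g realizing Stepanov almost automorphy. -/
def SOneAlmostAutomorphic (f : ℝ → ℂ) : Prop :=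
  LocallyIntegrable f volume ∧
  ∀ s : ℕ → ℝ, ∃ σ : ℕ → ℕ, StrictMono σ ∧ ∃ g : ℝ → ℂ, LocallyIntegrable g volume ∧
    (∀ x : ℝ, Tendsto (fun k => ∫ t in (0:ℝ)..1, ‖f (x + s (σ k) + t) - g (x + t)‖)
      atTop (nhds 0)) ∧
    (∀ x : ℝ, Tendsto (fun k => ∫ t in (0:ℝ)..1, ‖g (x - s (σ k) + t) - f (x + t)‖)
      atTop (nhds 0))

open Set Convolution

lemma aux_integrableOn_comp_sub_left {f : ℝ → ℂ} (hf : LocallyIntegrable f volume)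
    (c a b : ℝ) : IntegrableOn (fun y => f (c - y)) (Set.Icc a b) volume := by
  have hmp : MeasurePreserving (fun y : ℝ => c - y) volume volume :=
    Measure.measurePreserving_sub_left volume c
  have hemb : MeasurableEmbedding (fun y : ℝ => c - y) :=
    (Homeomorph.subLeft c).measurableEmbedding
  have h1 : IntegrableOn f (Set.Icc (c - b) (c - a)) volume :=
    hf.integrableOn_isCompact isCompact_Icc
  have h2 := (hmp.integrableOn_comp_preimage hemb
    (f := f) (s := Set.Icc (c - b) (c - a))).2 h1
  have hset : (fun y : ℝ => c - y) ⁻¹' Set.Icc (c - b) (c - a) = Set.Icc a b := by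
    ext y
    simp only [Set.mem_preimage, Set.mem_Icc]
    constructor <;> rintro ⟨h1, h2⟩ <;> constructor <;> linarith
  rwa [hset] at h2

lemma aux_integrableOn_comp_add_left {f : ℝ → ℂ} (hf : LocallyIntegrable f volume)
    (c a b : ℝ) : IntegrableOn (fun y => f (c + y)) (Set.Icc a b) volume := by
  have hmp : MeasurePreserving (fun y : ℝ => c + y) volume volume :=
    measurePreserving_add_left volume c
  have hemb : MeasurableEmbedding (fun y : ℝ => c + y) :=
    (Homeomorph.addLeft c).measurableEmbedding
  have h1 : IntegrableOn f (Set.Icc (c + a) (c + b)) volume :=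
    hf.integrableOn_isCompact isCompact_Icc
  have h2 := (hmp.integrableOn_comp_preimage hemb
    (f := f) (s := Set.Icc (c + a) (c + b))).2 h1
  have hset : (fun y : ℝ => c + y) ⁻¹' Set.Icc (c + a) (c + b) = Set.Icc a b := by
    ext y; simp [Set.mem_Icc]
  rwa [hset] at h2

lemma aux_key {f g : ℝ → ℂ} (hf : LocallyIntegrable f volume) (hg : LocallyIntegrable g volume)
    {φ : ℝ → ℂ} (hφ1 : Continuous φ) (hφ2 : HasCompactSupport φ) (s : ℕ → ℝ)
    (h : ∀ x : ℝ, Tendsto (fun k => ∫ t in (0:ℝ)..1, ‖f (x + s k + t) - g (x + t)‖)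
      atTop (nhds 0)) (x : ℝ) :
    Tendsto (fun k => ∫ y : ℝ, f (x + s k - y) * φ y) atTop
      (nhds (∫ y : ℝ, g (x - y) * φ y)) := by
  obtain ⟨C, hC⟩ := hφ2.exists_bound_of_continuous hφ1
  obtain ⟨r, hr⟩ := hφ2.isCompact.isBounded.subset_closedBall 0
  set n : ℕ := ⌈r⌉₊ + 1 with hn
  have hn0 : (0:ℝ) ≤ (n:ℝ) := by positivity
  have hrn : r ≤ (n : ℝ) := le_trans (Nat.le_ceil r) (by push_cast [hn]; linarith)
  have hsupp : ∀ y : ℝ, y ∉ Set.Icc (-(n:ℝ)) n → φ y = 0 := by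
    intro y hy
    apply image_eq_zero_of_notMem_tsupport
    intro hmem
    apply hy
    have h3 := hr hmem
    rw [Real.closedBall_eq_Icc] at h3
    simp only [zero_sub, zero_add, Set.mem_Icc] at h3 ⊢
    constructor <;> linarith [h3.1, h3.2]
  have hQint : ∀ (c a b : ℝ), IntervalIntegrable (fun u => ‖f (c + u) - g u‖) volume a b := by
    intro c a b
    apply IntegrableOn.intervalIntegrable
    have h4 : IntegrableOn (fun u => f (c + u) - g u) (Set.uIcc a b) volume := by
      rw [Set.uIcc]
      exact (aux_integrableOn_comp_add_left hf c _ _).sub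
        (hg.integrableOn_isCompact isCompact_Icc)
    exact h4.norm
  rw [tendsto_iff_norm_sub_tendsto_zero]
  have key : ∀ k : ℕ, ‖(∫ y : ℝ, f (x + s k - y) * φ y) - ∫ y : ℝ, g (x - y) * φ y‖ ≤
      C * ∑ j ∈ Finset.range (2 * n),
        ∫ t in (0:ℝ)..1, ‖f ((x - n + j) + s k + t) - g ((x - n + j) + t)‖ := by
    intro k
    set c := x + s k with hc
    have hIf : Integrable (fun y => f (c - y) * φ y) volume := by
      have h5 := ((hφ2.convolutionExists_right (ContinuousLinearMap.mul ℝ ℂ) hf hφ1)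
        c).integrable_swap
      simpa using h5
    have hIg : Integrable (fun y => g (x - y) * φ y) volume := by
      have h5 := ((hφ2.convolutionExists_right (ContinuousLinearMap.mul ℝ ℂ) hg hφ1)
        x).integrable_swap
      simpa using h5
    have hdiff : IntegrableOn (fun y : ℝ => f (c - y) - g (x - y)) (Set.Icc (-(n:ℝ)) n) volume :=
      (aux_integrableOn_comp_sub_left hf c _ _).sub (aux_integrableOn_comp_sub_left hg x _ _)
    have h1 : (∫ y : ℝ, f (c - y) * φ y) - ∫ y : ℝ, g (x - y) * φ y
        = ∫ y : ℝ, (f (c - y) - g (x - y)) * φ y := by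
      rw [← integral_sub hIf hIg]
      congr 1; ext y; ring
    have hprod : IntegrableOn (fun y => ‖(f (c - y) - g (x - y)) * φ y‖)
        (Set.Icc (-(n:ℝ)) n) volume := by
      apply Integrable.norm
      have h6 : (fun y : ℝ => (f (c - y) - g (x - y)) * φ y)
          = fun y => f (c - y) * φ y - g (x - y) * φ y := by ext y; ring
      rw [h6]; exact (hIf.sub hIg).integrableOn
    calc ‖(∫ y : ℝ, f (x + s k - y) * φ y) - ∫ y : ℝ, g (x - y) * φ y‖
        = ‖∫ y : ℝ, (f (c - y) - g (x - y)) * φ y‖ := by rw [← hc, h1]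
      _ ≤ ∫ y : ℝ, ‖(f (c - y) - g (x - y)) * φ y‖ := norm_integral_le_integral_norm _
      _ = ∫ y in Set.Icc (-(n:ℝ)) n, ‖(f (c - y) - g (x - y)) * φ y‖ := by
          rw [setIntegral_eq_integral_of_forall_compl_eq_zero]
          intro y hy
          rw [hsupp y hy, mul_zero, norm_zero]
      _ ≤ ∫ y in Set.Icc (-(n:ℝ)) n, C * ‖f (c - y) - g (x - y)‖ := by
          apply setIntegral_mono_on hprod (hdiff.norm.const_mul C) measurableSet_Icc
          intro y _
          rw [norm_mul, mul_comm]
          exact mul_le_mul_of_nonneg_right (hC y) (norm_nonneg _)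
      _ = C * ∫ y in (-(n:ℝ))..n, ‖f (c - y) - g (x - y)‖ := by
          rw [integral_const_mul, intervalIntegral.integral_of_le (by linarith),
            integral_Icc_eq_integral_Ioc]
      _ = C * ∫ u in (x - n)..(x + n), ‖f (s k + u) - g u‖ := by
          congr 1
          have harg : ∀ y : ℝ, f (c - y) - g (x - y) = f (s k + (x - y)) - g (x - y) := by
            intro y; rw [hc]; ring_nf
          simp only [harg]
          have h7 := intervalIntegral.integral_comp_sub_left (a := -(n:ℝ)) (b := (n:ℝ))
            (fun u => ‖f (s k + u) - g u‖) x
          rw [sub_neg_eq_add] at h7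
          exact h7
      _ = C * ∑ j ∈ Finset.range (2 * n),
            ∫ u in ((fun i : ℕ => x - (n:ℝ) + i) j)..((fun i : ℕ => x - (n:ℝ) + i) (j+1)),
              ‖f (s k + u) - g u‖ := by
          congr 1
          have h8 := intervalIntegral.sum_integral_adjacent_intervals
            (a := fun i : ℕ => x - (n:ℝ) + i) (n := 2*n)
            (f := fun u => ‖f (s k + u) - g u‖) (fun i _ => hQint (s k) _ _)
          rw [h8]
          congr 1
          · norm_num
          · push_cast; ring
      _ = C * ∑ j ∈ Finset.range (2 * n),
            ∫ t in (0:ℝ)..1, ‖f ((x - n + j) + s k + t) - g ((x - n + j) + t)‖ := by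
          congr 1
          apply Finset.sum_congr rfl
          intro j _
          have h9 := intervalIntegral.integral_comp_add_left (a := (0:ℝ)) (b := (1:ℝ))
            (fun u => ‖f (s k + u) - g u‖) (x - (n:ℝ) + j)
          rw [add_zero] at h9
          have e : ∀ t : ℝ, (x - (n:ℝ) + (j:ℝ)) + s k + t = s k + (x - (n:ℝ) + (j:ℝ) + t) := by
            intro t; ring
          simp only
          rw [show x - (n:ℝ) + ((j:ℕ)+1:ℕ) = x - (n:ℝ) + (j:ℝ) + 1 by push_cast; ring]
          rw [← h9]
          simp only [e]
  have hbound : Tendsto (fun k => C * ∑ j ∈ Finset.range (2*n),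
      ∫ t in (0:ℝ)..1, ‖f ((x - n + j) + s k + t) - g ((x - n + j) + t)‖) atTop (nhds 0) := by
    have h10 := tendsto_finset_sum (Finset.range (2*n)) (fun j _ => h (x - n + j))
    simpa using h10.const_mul C
  exact squeeze_zero (fun k => norm_nonneg _) key hbound
/-- An S¹-almost automorphic function is an almost automorphic distribution: its convolution
with every test function is almost automorphic. -/
theorem sOneAlmostAutomorphic_isAlmostAutomorphicDistribution (f : ℝ → ℂ)
    (hf : SOneAlmostAutomorphic f) :
    ∀ φ : ℝ → ℂ, IsTestFunction φ →
      AlmostAutomorphic (fun x => ∫ y : ℝ, f (x - y) * φ y) := by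
  intro φ hφ
  obtain ⟨hφ1, hφ2⟩ := hφ
  constructor
  · have heq : (fun x => ∫ y : ℝ, f (x - y) * φ y)
        = f ⋆[ContinuousLinearMap.mul ℝ ℂ, volume] φ := by
      funext x
      exact (convolution_mul_swap (μ := volume) (f := f) (g := φ) (x := x)).symm
    rw [heq]
    exact hφ2.continuous_convolution_right _ hf.1 hφ1.continuous
  · intro s
    obtain ⟨σ, hσ, g, hgl, h1, h2⟩ := hf.2 s
    refine ⟨σ, hσ, fun x => ∫ y : ℝ, g (x - y) * φ y, ?_, ?_⟩
    · intro x
      exact aux_key hf.1 hgl hφ1.continuous hφ2 (fun k => s (σ k)) h1 x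
    · intro x
      have h2' : ∀ z : ℝ, Tendsto (fun k => ∫ t in (0:ℝ)..1,
          ‖g (z + (-(s (σ k))) + t) - f (z + t)‖) atTop (nhds 0) := by
        intro z
        have h3 := h2 z
        simpa [sub_eq_add_neg] using h3
      have h4 := aux_key hgl hf.1 hφ1.continuous hφ2 (fun k => -(s (σ k))) h2' x
      simpa [sub_eq_add_neg] using h4
end

section
/- Let f : ℝ → ℂ be a locally integrable S¹-almost automorphic function, let (s_m) be any sequence of real numbers, and let (s_{m_k}) and g be a subsequence and a locally integrable function realizing the S¹-almost automorphy of f along (s_m). Then for every infinitely differentiable compactly supported φ : ℝ → ℂ, lim_{k→∞} ∫_ℝ f(t + s_{m_k}) φ(t) dt = ∫_ℝ g(t) φ(t) dt and lim_{k→∞} ∫_ℝ g(t − s_{m_k}) φ(t) dt = ∫_ℝ f(t) φ(t) dt. -/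
open Filter MeasureTheory

lemma locInt_translate (f : ℝ → ℂ) (hf : LocallyIntegrable f volume) (c : ℝ) :
    LocallyIntegrable (fun t => f (t + c)) volume := by
  rw [MeasureTheory.locallyIntegrable_iff] at hf ⊢
  intro k hk
  have h1 : IntegrableOn f ((fun t => t + c) '' k) volume :=
    hf _ (hk.image (continuous_id.add continuous_const))
  have h2 := ((measurePreserving_add_right volume c).integrableOn_image
    (MeasurableEquiv.addRight c).measurableEmbedding).mp h1
  exact h2

lemma integrable_mul_test (h : ℝ → ℂ) (hh : LocallyIntegrable h volume)
    (φ : ℝ → ℂ) (hφc : Continuous φ) (hφs : HasCompactSupport φ) :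
    Integrable (fun t => h t * φ t) volume := by
  have hK : IsCompact (tsupport φ) := hφs
  have heq : (fun t => φ t * (tsupport φ).indicator h t) = fun t => h t * φ t := by
    funext t
    by_cases ht : t ∈ tsupport φ
    · simp [Set.indicator_of_mem ht, mul_comm]
    · simp [Set.indicator_of_notMem ht, image_eq_zero_of_notMem_tsupport ht]
  rw [← heq]
  exact Integrable.bdd_mul
    ((integrable_indicator_iff hK.measurableSet).2 (hh.integrableOn_isCompact hK))
    hφc.aestronglyMeasurable
      (Filter.Eventually.of_forall (hφc.bounded_above_of_compact_support hφs).choose_spec)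

lemma key (h : ℕ → ℝ → ℂ) (hloc : ∀ k, LocallyIntegrable (h k) volume)
    (hlim : ∀ x : ℝ, Tendsto (fun k => ∫ t in (0:ℝ)..1, ‖h k (x + t)‖) atTop (nhds 0))
    (φ : ℝ → ℂ) (hφc : Continuous φ) (hφs : HasCompactSupport φ) :
    Tendsto (fun k => ∫ t : ℝ, h k t * φ t) atTop (nhds 0) := by
  obtain ⟨r, hr⟩ : ∃ r : ℝ, tsupport φ ⊆ Metric.closedBall 0 r :=
    hφs.isBounded.subset_closedBall 0
  obtain ⟨N, hN⟩ := exists_nat_gt r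
  have hsupp : tsupport φ ⊆ Set.Ioc (-(N:ℝ)) N := by
    intro x hx
    have := hr hx
    rw [Metric.mem_closedBall, Real.dist_eq, sub_zero] at this
    have := abs_le.1 this
    constructor <;> [linarith [this.1]; linarith [this.2]]
  obtain ⟨M, hM⟩ := hφc.bounded_above_of_compact_support hφs
  have hM0 : 0 ≤ M := le_trans (norm_nonneg _) (hM 0)
  set b : ℕ → ℝ := fun k => M * ∑ j ∈ Finset.range (2*N),
    ∫ t in (0:ℝ)..1, ‖h k (((j:ℝ) - N) + t)‖ with hb
  have hbtend : Tendsto b atTop (nhds 0) := by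
    have := (tendsto_finset_sum (Finset.range (2*N))
      (fun j _ => hlim ((j:ℝ) - N))).const_mul M
    simpa using this
  have hbound : ∀ k, ‖∫ t : ℝ, h k t * φ t‖ ≤ b k := by
    intro k
    have hiint : ∀ (a c : ℝ), IntervalIntegrable (fun t => ‖h k t‖) volume a c := fun a c =>
      (((hloc k).integrableOn_isCompact isCompact_uIcc).intervalIntegrable).norm
    have hsum : ∑ j ∈ Finset.range (2*N), ∫ t in (0:ℝ)..1, ‖h k (((j:ℝ) - N) + t)‖
        = ∫ t in (-(N:ℝ))..N, ‖h k t‖ := by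
      have hshift : ∀ j : ℕ, (∫ t in (0:ℝ)..1, ‖h k (((j:ℝ) - N) + t)‖)
          = ∫ t in (((j:ℝ) - N))..((j:ℝ) - N + 1), ‖h k t‖ := by
        intro j
        rw [intervalIntegral.integral_comp_add_left (fun t => ‖h k t‖) ((j:ℝ) - N)]
        norm_num
      simp_rw [hshift]
      have := intervalIntegral.sum_integral_adjacent_intervals
        (a := fun j : ℕ => (j:ℝ) - N) (n := 2*N) (f := fun t => ‖h k t‖) (μ := volume)
        (fun j _ => hiint _ _)
      push_cast at this
      rw [show (0:ℝ) - N = -N by ring, show 2*(N:ℝ) - N = N by ring] at this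
      rw [← this]
      exact Finset.sum_congr rfl fun j _ => by rw [show (j:ℝ) - N + 1 = (j:ℝ) + 1 - N by ring]
    rw [hb]; dsimp only; rw [hsum]
    have heqset : (∫ t : ℝ, h k t * φ t) = ∫ t in (-(N:ℝ))..N, h k t * φ t := by
      rw [intervalIntegral.integral_eq_integral_of_support_subset]
      intro t ht
      have : t ∈ tsupport φ := by
        by_contra hc
        exact ht (by simp [image_eq_zero_of_notMem_tsupport hc])
      exact hsupp this
    rw [heqset]
    calc ‖∫ t in (-(N:ℝ))..N, h k t * φ t‖
        ≤ |∫ t in (-(N:ℝ))..N, M * ‖h k t‖| := by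
          apply intervalIntegral.norm_integral_le_abs_of_norm_le
          · refine Filter.Eventually.of_forall fun t => ?_
            rw [norm_mul]
            calc ‖h k t‖ * ‖φ t‖ ≤ ‖h k t‖ * M :=
                  mul_le_mul_of_nonneg_left (hM t) (norm_nonneg _)
              _ = M * ‖h k t‖ := mul_comm _ _
          · exact (hiint _ _).const_mul M
      _ = |M * ∫ t in (-(N:ℝ))..N, ‖h k t‖| := by
          rw [intervalIntegral.integral_const_mul]
      _ = M * ∫ t in (-(N:ℝ))..N, ‖h k t‖ := by
          rw [abs_of_nonneg]
          exact mul_nonneg hM0 (intervalIntegral.integral_nonneg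
            (neg_le_self (Nat.cast_nonneg N)) (fun t _ => norm_nonneg _))
  have := squeeze_zero (fun k => norm_nonneg _) hbound hbtend
  exact tendsto_zero_iff_norm_tendsto_zero.2 this

/-- If a subsequence and a locally integrable function g realize the S¹-almost automorphy of a
locally integrable f along a sequence, then the corresponding translated distributions converge:
pairing against any test function, the translates of f converge to g and the back-translates
of g converge to f. -/
theorem sOne_realization_distributional_convergence (f g : ℝ → ℂ)
    (hf : LocallyIntegrable f volume) (hg : LocallyIntegrable g volume)
    (s : ℕ → ℝ) (σ : ℕ → ℕ) (hσ : StrictMono σ)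
    (h1 : ∀ x : ℝ, Tendsto (fun k => ∫ t in (0:ℝ)..1, ‖f (x + s (σ k) + t) - g (x + t)‖)
      atTop (nhds 0))
    (h2 : ∀ x : ℝ, Tendsto (fun k => ∫ t in (0:ℝ)..1, ‖g (x - s (σ k) + t) - f (x + t)‖)
      atTop (nhds 0)) :
    ∀ φ : ℝ → ℂ, IsTestFunction φ →
      Tendsto (fun k => ∫ t : ℝ, f (t + s (σ k)) * φ t) atTop (nhds (∫ t : ℝ, g t * φ t)) ∧
      Tendsto (fun k => ∫ t : ℝ, g (t - s (σ k)) * φ t) atTop (nhds (∫ t : ℝ, f t * φ t)) := by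
  intro φ hφ
  have hφc : Continuous φ := hφ.1.continuous
  have hφs : HasCompactSupport φ := hφ.2
  constructor
  · -- translates of f converge to g
    have hlock : ∀ k, LocallyIntegrable (fun t => f (t + s (σ k)) - g t) volume := fun k => by
      have := (locInt_translate f hf (s (σ k))).sub hg
      exact this
    have hdiff : Tendsto (fun k => ∫ t : ℝ, (f (t + s (σ k)) - g t) * φ t) atTop (nhds 0) := by
      apply key _ hlock _ φ hφc hφs
      intro x
      have := h1 x
      refine this.congr fun k => ?_
      apply intervalIntegral.integral_congr
      intro t _
      dsimp only; rw [add_right_comm]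
    have int2 : Integrable (fun t => g t * φ t) volume := integrable_mul_test g hg φ hφc hφs
    have heq : ∀ k, (∫ t : ℝ, f (t + s (σ k)) * φ t)
        = (∫ t : ℝ, (f (t + s (σ k)) - g t) * φ t) + ∫ t : ℝ, g t * φ t := by
      intro k
      have int1 : Integrable (fun t => f (t + s (σ k)) * φ t) volume :=
        integrable_mul_test _ (locInt_translate f hf (s (σ k))) φ hφc hφs
      have hsub : Integrable (fun t => (f (t + s (σ k)) - g t) * φ t) volume := by
        simpa [sub_mul, Pi.sub_def] using int1.sub int2
      rw [← MeasureTheory.integral_add hsub int2]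
      exact integral_congr_ae (Filter.Eventually.of_forall fun t => by ring)
    have := hdiff.add_const (∫ t : ℝ, g t * φ t)
    rw [zero_add] at this
    exact this.congr fun k => (heq k).symm
  · -- back-translates of g converge to f
    have hlock : ∀ k, LocallyIntegrable (fun t => g (t - s (σ k)) - f t) volume := fun k => by
      have h' : LocallyIntegrable (fun t => g (t + -s (σ k))) volume :=
        locInt_translate g hg (-s (σ k))
      have := h'.sub hf
      simpa [sub_eq_add_neg, Pi.add_def, Pi.neg_def] using this
    have hdiff : Tendsto (fun k => ∫ t : ℝ, (g (t - s (σ k)) - f t) * φ t) atTop (nhds 0) := by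
      apply key _ hlock _ φ hφc hφs
      intro x
      have := h2 x
      refine this.congr fun k => ?_
      apply intervalIntegral.integral_congr
      intro t _
      dsimp only; rw [add_sub_right_comm]
    have int2 : Integrable (fun t => f t * φ t) volume := integrable_mul_test f hf φ hφc hφs
    have heq : ∀ k, (∫ t : ℝ, g (t - s (σ k)) * φ t)
        = (∫ t : ℝ, (g (t - s (σ k)) - f t) * φ t) + ∫ t : ℝ, f t * φ t := by
      intro k
      have int1 : Integrable (fun t => g (t - s (σ k)) * φ t) volume := by
        have := integrable_mul_test _ (locInt_translate g hg (-s (σ k))) φ hφc hφs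
        simpa [sub_eq_add_neg] using this
      have hsub : Integrable (fun t => (g (t - s (σ k)) - f t) * φ t) volume := by
        simpa [sub_mul, Pi.sub_def] using int1.sub int2
      rw [← MeasureTheory.integral_add hsub int2]
      exact integral_congr_ae (Filter.Eventually.of_forall fun t => by ring)
    have := hdiff.add_const (∫ t : ℝ, f t * φ t)
    rw [zero_add] at this
    exact this.congr fun k => (heq k).symm
end

section
/- Let f : ℝ → ℂ be bounded and measurable such that f ∗ φ is almost automorphic for every φ ∈ D, and let g ∈ L¹(ℝ). Then the convolution f ∗ g is again an almost automorphic distribution: (f ∗ g) ∗ φ is almost automorphic for every φ ∈ D. -/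
open Filter MeasureTheory

/-- Dominated convergence for convolution-type integrals against an integrable `g`. -/
lemma aux_conv_tendsto {g : ℝ → ℂ} (hg : Integrable g) {M : ℝ} {h : ℕ → ℝ → ℂ} {H : ℝ → ℂ}
    (hm : ∀ n, AEStronglyMeasurable (h n) (volume : Measure ℝ))
    (hb : ∀ n x, ‖h n x‖ ≤ M)
    (hlim : ∀ x, Tendsto (fun n => h n x) atTop (nhds (H x))) :
    Tendsto (fun n => ∫ z : ℝ, h n z * g z) atTop (nhds (∫ z : ℝ, H z * g z)) := by
  apply tendsto_integral_of_dominated_convergence (fun z => M * ‖g z‖)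
  · exact fun n => (hm n).mul hg.1
  · exact hg.norm.const_mul M
  · intro n
    filter_upwards with z
    rw [norm_mul]
    exact mul_le_mul_of_nonneg_right (hb n z) (norm_nonneg _)
  · filter_upwards with z
    exact (hlim z).mul tendsto_const_nhds

/-- Convolution of a bounded almost automorphic function with an integrable function is
almost automorphic. -/
lemma aux_aa_conv {h g : ℝ → ℂ} (hg : Integrable g) (haa : AlmostAutomorphic h)
    {M : ℝ} (hb : ∀ x, ‖h x‖ ≤ M) :
    AlmostAutomorphic (fun x => ∫ z : ℝ, h (x - z) * g z) := by
  obtain ⟨hcont, hprop⟩ := haa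
  constructor
  · apply SeqContinuous.continuous
    intro u x hu
    exact aux_conv_tendsto hg (h := fun n z => h (u n - z)) (H := fun z => h (x - z)) (M := M)
      (fun n => (hcont.comp (continuous_const.sub continuous_id)).aestronglyMeasurable)
      (fun n z => hb _)
      (fun z => (hcont.tendsto (x - z)).comp (hu.sub tendsto_const_nhds))
  · intro s
    obtain ⟨σ, hσ, G, hfor, hback⟩ := hprop s
    have hGsm : StronglyMeasurable G := by
      apply stronglyMeasurable_of_tendsto atTop
        (f := fun k => fun y => h (y + s (σ k)))
      · exact fun k => (hcont.comp (continuous_id.add continuous_const)).stronglyMeasurable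
      · rw [tendsto_pi_nhds]
        exact hfor
    have hGb : ∀ x, ‖G x‖ ≤ M :=
      fun x => le_of_tendsto (hfor x).norm (Eventually.of_forall fun k => hb _)
    refine ⟨σ, hσ, fun x => ∫ z : ℝ, G (x - z) * g z, ?_, ?_⟩
    · intro x
      apply aux_conv_tendsto hg (h := fun k z => h (x + s (σ k) - z))
        (H := fun z => G (x - z)) (M := M)
      · exact fun k => (hcont.comp (continuous_const.sub continuous_id)).aestronglyMeasurable
      · exact fun k z => hb _
      · intro z
        simpa [sub_add_eq_add_sub] using hfor (x - z)
    · intro x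
      apply aux_conv_tendsto hg (h := fun k z => G (x - s (σ k) - z))
        (H := fun z => h (x - z)) (M := M)
      · exact fun k =>
          (hGsm.comp_measurable (measurable_const.sub measurable_id)).aestronglyMeasurable
      · exact fun k z => hGb _
      · intro z
        simpa [sub_right_comm] using hback (x - z)

/-- The convolution of a (bounded measurable) almost automorphic distribution with an
integrable function is again an almost automorphic distribution. -/
theorem almostAutomorphicDistribution_convolution_integrable (f g : ℝ → ℂ)
    (hmeas : Measurable f) (hbdd : ∃ C : ℝ, ∀ x : ℝ, ‖f x‖ ≤ C)
    (haa : ∀ φ : ℝ → ℂ, IsTestFunction φ →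
      AlmostAutomorphic (fun x => ∫ y : ℝ, f (x - y) * φ y))
    (hg : Integrable g) :
    ∀ φ : ℝ → ℂ, IsTestFunction φ →
      AlmostAutomorphic (fun x => ∫ y : ℝ, (∫ z : ℝ, f ((x - y) - z) * g z) * φ y) := by
  intro φ hφ
  obtain ⟨C, hC⟩ := hbdd
  have hφcont : Continuous φ := hφ.1.continuous
  have hφint : Integrable φ := hφcont.integrable_of_hasCompactSupport hφ.2
  set h : ℝ → ℂ := fun u => ∫ w : ℝ, f (u - w) * φ w with hh
  have hhb : ∀ u, ‖h u‖ ≤ ∫ w : ℝ, C * ‖φ w‖ := by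
    intro u
    apply norm_integral_le_of_norm_le (hφint.norm.const_mul C)
    filter_upwards with w
    rw [norm_mul]
    exact mul_le_mul_of_nonneg_right (hC _) (norm_nonneg _)
  have hK : AlmostAutomorphic (fun x => ∫ z : ℝ, h (x - z) * g z) :=
    aux_aa_conv hg (haa φ hφ) hhb
  have heq : (fun x => ∫ y : ℝ, (∫ z : ℝ, f ((x - y) - z) * g z) * φ y)
      = fun x => ∫ z : ℝ, h (x - z) * g z := by
    funext x
    have hint : Integrable (Function.uncurry fun y z => f (x - y - z) * g z * φ y)
        ((volume : Measure ℝ).prod volume) := by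
      apply Integrable.mono' (hφint.norm.mul_prod (hg.norm.const_mul C))
      · have h1 : AEStronglyMeasurable (fun p : ℝ × ℝ => f (x - p.1 - p.2))
            ((volume : Measure ℝ).prod volume) :=
          (hmeas.comp ((measurable_const.sub measurable_fst).sub measurable_snd)).aestronglyMeasurable
        have h2 : AEStronglyMeasurable (fun p : ℝ × ℝ => g p.2)
            ((volume : Measure ℝ).prod volume) := hg.1.comp_snd
        have h3 : AEStronglyMeasurable (fun p : ℝ × ℝ => φ p.1)
            ((volume : Measure ℝ).prod volume) := (hφcont.comp continuous_fst).aestronglyMeasurable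
        exact (h1.mul h2).mul h3
      · filter_upwards with p
        have h1 : ‖f (x - p.1 - p.2) * g p.2 * φ p.1‖
            = ‖f (x - p.1 - p.2)‖ * ‖g p.2‖ * ‖φ p.1‖ := by
          rw [norm_mul, norm_mul]
        rw [Function.uncurry]
        rw [h1]
        have h2 : ‖f (x - p.1 - p.2)‖ * ‖g p.2‖ * ‖φ p.1‖ ≤ C * ‖g p.2‖ * ‖φ p.1‖ :=
          mul_le_mul_of_nonneg_right
            (mul_le_mul_of_nonneg_right (hC _) (norm_nonneg _)) (norm_nonneg _)
        calc ‖f (x - p.1 - p.2)‖ * ‖g p.2‖ * ‖φ p.1‖ ≤ C * ‖g p.2‖ * ‖φ p.1‖ := h2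
          _ = ‖φ p.1‖ * (C * ‖g p.2‖) := by ring
    calc ∫ y : ℝ, (∫ z : ℝ, f ((x - y) - z) * g z) * φ y
        = ∫ y : ℝ, ∫ z : ℝ, f (x - y - z) * g z * φ y := by
          congr 1; funext y
          rw [← integral_mul_const]
      _ = ∫ z : ℝ, ∫ y : ℝ, f (x - y - z) * g z * φ y := integral_integral_swap hint
      _ = ∫ z : ℝ, h (x - z) * g z := by
          congr 1; funext z
          rw [hh]
          simp only
          rw [← integral_mul_const]
          congr 1; funext y
          have : x - y - z = x - z - y := by ring
          rw [this]; ring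
  rw [heq]
  exact hK
end

section
/- (Bohl–Bohr type theorem for almost automorphic distributions, bounded function case) Let f : ℝ → ℂ be bounded and measurable such that f ∗ φ is almost automorphic for every φ ∈ D, and let F(x) = ∫_0^x f(t) dt. If F is bounded on ℝ, then F is an almost automorphic distribution: F ∗ φ is almost automorphic for every φ ∈ D. -/
open Filter MeasureTheory

/-- bounded a.e.-strongly-measurable functions are interval integrable -/
lemma aux_bdd_intervalIntegrable {h : ℝ → ℂ} (hm : AEStronglyMeasurable h volume)
    {C : ℝ} (hb : ∀ x, ‖h x‖ ≤ C) (a b : ℝ) : IntervalIntegrable h volume a b := by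
  rw [intervalIntegrable_iff]
  have hfin : volume (Set.uIoc a b) < ⊤ :=
    lt_of_le_of_lt (measure_mono Set.uIoc_subset_uIcc) isCompact_uIcc.measure_lt_top
  exact Integrable.mono' (integrableOn_const hfin.ne) hm.restrict
    (Filter.Eventually.of_forall fun x => hb x)

/-- dominated convergence for interval integrals with constant bound -/
lemma aux_tendsto_intervalIntegral {h : ℕ → ℝ → ℂ} {h' : ℝ → ℂ} {C : ℝ}
    (hm : ∀ n, AEStronglyMeasurable (h n) volume)
    (hb : ∀ n x, ‖h n x‖ ≤ C)
    (hlim : ∀ x, Tendsto (fun n => h n x) atTop (nhds (h' x))) (a b : ℝ) :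
    Tendsto (fun n => ∫ t in a..b, h n t) atTop (nhds (∫ t in a..b, h' t)) := by
  have hfin : volume (Set.uIoc a b) < ⊤ :=
    lt_of_le_of_lt (measure_mono Set.uIoc_subset_uIcc) isCompact_uIcc.measure_lt_top
  simp_rw [intervalIntegral.intervalIntegral_eq_integral_uIoc]
  apply Filter.Tendsto.const_smul
  exact tendsto_integral_of_dominated_convergence (fun _ => C) (fun n => (hm n).restrict)
    (integrableOn_const hfin.ne)
    (fun n => Filter.Eventually.of_forall fun x => hb n x)
    (Filter.Eventually.of_forall fun x => hlim x)

/-- bound for integrals against an integrable weight -/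
lemma aux_int_norm_le {f1 φ : ℝ → ℂ} {C : ℝ} (hint : Integrable (fun y => f1 y * φ y) volume)
    (hφ : Integrable φ volume) (hC : ∀ x, ‖f1 x‖ ≤ C) :
    (∫ y : ℝ, ‖f1 y * φ y‖) ≤ C * ∫ y : ℝ, ‖φ y‖ := by
  rw [← integral_const_mul]
  refine integral_mono hint.norm (hφ.norm.const_mul C) fun y => ?_
  rw [norm_mul]
  exact mul_le_mul_of_nonneg_right (hC _) (norm_nonneg _)

lemma aux_norm_int_le {f1 φ : ℝ → ℂ} {C : ℝ} (hint : Integrable (fun y => f1 y * φ y) volume)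
    (hφ : Integrable φ volume) (hC : ∀ x, ‖f1 x‖ ≤ C) :
    ‖∫ y : ℝ, f1 y * φ y‖ ≤ C * ∫ y : ℝ, ‖φ y‖ :=
  (norm_integral_le_integral_norm _).trans (aux_int_norm_le hint hφ hC)

/-- Bohl-Bohr for almost automorphic distributions, bounded function case: a bounded primitive
of a bounded measurable almost automorphic distribution is an almost automorphic distribution. -/
theorem almostAutomorphicDistribution_primitive_of_bounded (f : ℝ → ℂ)
    (hmeas : Measurable f) (hbdd : ∃ C : ℝ, ∀ x : ℝ, ‖f x‖ ≤ C)
    (haa : ∀ φ : ℝ → ℂ, IsTestFunction φ →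
      AlmostAutomorphic (fun x => ∫ y : ℝ, f (x - y) * φ y))
    (hFbdd : ∃ C : ℝ, ∀ x : ℝ, ‖∫ t in (0:ℝ)..x, f t‖ ≤ C) :
    ∀ φ : ℝ → ℂ, IsTestFunction φ →
      AlmostAutomorphic (fun x => ∫ y : ℝ, (∫ t in (0:ℝ)..(x - y), f t) * φ y) := by
  obtain ⟨Cf, hCf⟩ := hbdd
  obtain ⟨CF, hCF⟩ := hFbdd
  intro φ hφ
  obtain ⟨hφc, hφs⟩ := hφ
  have hφcont : Continuous φ := hφc.continuous
  have hφint : Integrable φ := hφcont.integrable_of_hasCompactSupport hφs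
  set F : ℝ → ℂ := fun x => ∫ t in (0:ℝ)..x, f t with hFdef
  set g : ℝ → ℂ := fun x => ∫ y : ℝ, f (x - y) * φ y with hgdef
  set G : ℝ → ℂ := fun x => ∫ y : ℝ, (∫ t in (0:ℝ)..(x - y), f t) * φ y with hGdef
  have hGF : ∀ x : ℝ, G x = ∫ y : ℝ, F (x - y) * φ y := fun x => rfl
  have hgaa : AlmostAutomorphic g := haa φ ⟨hφc, hφs⟩
  have hgcont : Continuous g := hgaa.1
  set Iφ : ℝ := ∫ y : ℝ, ‖φ y‖ with hIφdef
  have hfint : ∀ a b : ℝ, IntervalIntegrable f volume a b :=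
    aux_bdd_intervalIntegrable hmeas.aestronglyMeasurable hCf
  -- integrability of the convolution integrands
  have integrand_f : ∀ x : ℝ, Integrable (fun y => f (x - y) * φ y) := by
    intro x
    refine Integrable.mono' (hφint.norm.const_mul Cf)
      (((hmeas.comp (measurable_const.sub measurable_id)).mul hφcont.measurable).aestronglyMeasurable)
      (Filter.Eventually.of_forall fun y => ?_)
    rw [norm_mul]
    exact mul_le_mul_of_nonneg_right (hCf _) (norm_nonneg _)
  have hFcont : Continuous F := intervalIntegral.continuous_primitive hfint 0
  have integrand_F : ∀ x : ℝ, Integrable (fun y => F (x - y) * φ y) := by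
    intro x
    refine Integrable.mono' (hφint.norm.const_mul CF)
      (((hFcont.comp (continuous_const.sub continuous_id)).mul hφcont).measurable.aestronglyMeasurable)
      (Filter.Eventually.of_forall fun y => ?_)
    rw [norm_mul]
    exact mul_le_mul_of_nonneg_right (hCF _) (norm_nonneg _)
  -- bounds
  have hgbd : ∀ x : ℝ, ‖g x‖ ≤ Cf * Iφ := by
    intro x
    exact aux_norm_int_le (integrand_f x) hφint fun y => hCf _
  have hGbd : ∀ x : ℝ, ‖G x‖ ≤ CF * Iφ := by
    intro x
    rw [hGF x]
    exact aux_norm_int_le (integrand_F x) hφint fun y => hCF _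
  -- Fubini swap
  have swap : ∀ x : ℝ, (∫ y : ℝ, ∫ t in (0:ℝ)..x, f (t - y) * φ y) =
      ∫ t in (0:ℝ)..x, ∫ y : ℝ, f (t - y) * φ y := by
    intro x
    have hfin : volume (Set.uIoc (0:ℝ) x) < ⊤ :=
      lt_of_le_of_lt (measure_mono Set.uIoc_subset_uIcc) isCompact_uIcc.measure_lt_top
    have hKm : AEStronglyMeasurable (fun p : ℝ × ℝ => f (p.1 - p.2) * φ p.2)
        ((volume.restrict (Set.uIoc (0:ℝ) x)).prod volume) :=
      ((hmeas.comp (measurable_fst.sub measurable_snd)).mul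
        (hφcont.measurable.comp measurable_snd)).aestronglyMeasurable
    have hKint : Integrable (fun p : ℝ × ℝ => f (p.1 - p.2) * φ p.2)
        ((volume.restrict (Set.uIoc (0:ℝ) x)).prod volume) := by
      refine (integrable_prod_iff hKm).2 ⟨?_, ?_⟩
      · exact Filter.Eventually.of_forall fun t => integrand_f t
      · refine Integrable.mono' (g := fun _ => Cf * Iφ)
          (integrableOn_const hfin.ne) hKm.norm.integral_prod_right'
          (Filter.Eventually.of_forall fun t => ?_)
        have h1 : (0:ℝ) ≤ ∫ y : ℝ, ‖f (t - y) * φ y‖ :=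
          integral_nonneg fun y => norm_nonneg _
        rw [Real.norm_eq_abs, abs_of_nonneg h1]
        exact aux_int_norm_le (integrand_f t) hφint fun y => hCf _
    have hswap := integral_integral_swap (f := fun t y => f (t - y) * φ y) hKint
    simp_rw [intervalIntegral.intervalIntegral_eq_integral_uIoc]
    rw [integral_smul, hswap]
  -- key identity
  have keyG : ∀ x : ℝ, G x = G 0 + ∫ t in (0:ℝ)..x, g t := by
    intro x
    have h1 : G x - G 0 = ∫ y : ℝ, (F (x - y) - F (0 - y)) * φ y := by
      rw [hGF x, hGF 0, ← integral_sub (integrand_F x) (integrand_F 0)]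
      simp_rw [sub_mul]
    have h2 : ∀ y : ℝ, F (x - y) - F (0 - y) = ∫ t in (0:ℝ)..x, f (t - y) := by
      intro y
      rw [intervalIntegral.integral_comp_sub_right f y]
      exact intervalIntegral.integral_interval_sub_left (hfint 0 (x - y)) (hfint 0 (0 - y))
    have h3 : G x - G 0 = ∫ t in (0:ℝ)..x, g t := by
      rw [h1]
      simp_rw [h2, ← intervalIntegral.integral_mul_const]
      exact swap x
    linear_combination h3
  have hGcont : Continuous G := by
    have : G = fun x => G 0 + ∫ t in (0:ℝ)..x, g t := funext keyG
    rw [this]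
    exact continuous_const.add
      (intervalIntegral.continuous_primitive (fun a b => hgcont.intervalIntegrable a b) 0)
  refine ⟨hGcont, ?_⟩
  intro s
  obtain ⟨σ1, hσ1, gt, hfor, hback⟩ := hgaa.2 s
  set s1 : ℕ → ℝ := fun k => s (σ1 k) with hs1def
  -- gt is measurable and bounded
  have hgtmeas : Measurable gt := by
    refine measurable_of_tendsto_metrizable
      (f := fun k x => g (x + s1 k)) (fun k => hgcont.measurable.comp (by fun_prop)) ?_
    rw [tendsto_pi_nhds]
    exact hfor
  have hgtbd : ∀ x : ℝ, ‖gt x‖ ≤ Cf * Iφ := fun x =>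
    le_of_tendsto (hfor x).norm (Filter.Eventually.of_forall fun k => hgbd _)
  have hgtint : ∀ a b : ℝ, IntervalIntegrable gt volume a b :=
    aux_bdd_intervalIntegrable hgtmeas.aestronglyMeasurable hgtbd
  -- extract convergence of G (s1 k)
  obtain ⟨a, -, σ2, hσ2, ha⟩ := tendsto_subseq_of_bounded
    (Metric.isBounded_closedBall (x := (0:ℂ)) (r := CF * Iφ))
    (x := fun k => G (s1 k)) (fun k => mem_closedBall_zero_iff.2 (hGbd _))
  set s2 : ℕ → ℝ := fun k => s1 (σ2 k) with hs2def
  have ha2 : Tendsto (fun k => G (s2 k)) atTop (nhds a) := ha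
  set Gt : ℝ → ℂ := fun x => a + ∫ t in (0:ℝ)..x, gt t with hGtdef
  -- forward convergence for G along s2
  have hGdiff : ∀ x u : ℝ, G (x + u) = G u + ∫ t in (0:ℝ)..x, g (t + u) := by
    intro x u
    rw [intervalIntegral.integral_comp_add_right, zero_add, keyG (x + u), keyG u]
    rw [← intervalIntegral.integral_interval_sub_left
      (hgcont.intervalIntegrable 0 (x + u)) (hgcont.intervalIntegrable 0 u)]
    ring
  have hforG2 : ∀ x : ℝ, Tendsto (fun k => G (x + s2 k)) atTop (nhds (Gt x)) := by
    intro x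
    have h1 : ∀ k, G (x + s2 k) = G (s2 k) + ∫ t in (0:ℝ)..x, g (t + s2 k) :=
      fun k => hGdiff x (s2 k)
    simp_rw [h1]
    refine ha2.add ?_
    refine aux_tendsto_intervalIntegral (C := Cf * Iφ)
      (fun k => (hgcont.comp (by fun_prop)).aestronglyMeasurable)
      (fun k t => hgbd _) (fun t => ?_) 0 x
    exact (hfor t).comp (hσ2.tendsto_atTop)
  have hGtbd : ∀ x : ℝ, ‖Gt x‖ ≤ CF * Iφ := fun x =>
    le_of_tendsto (hforG2 x).norm (Filter.Eventually.of_forall fun k => hGbd _)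
  -- extract convergence of Gt (-(s2 k))
  obtain ⟨b, -, σ3, hσ3, hb⟩ := tendsto_subseq_of_bounded
    (Metric.isBounded_closedBall (x := (0:ℂ)) (r := CF * Iφ))
    (x := fun k => Gt (-(s2 k))) (fun k => mem_closedBall_zero_iff.2 (hGtbd _))
  set s3 : ℕ → ℝ := fun k => s2 (σ3 k) with hs3def
  have hb3 : Tendsto (fun k => Gt (-(s3 k))) atTop (nhds b) := hb
  set c : ℂ := b - G 0 with hcdef
  -- backward convergence for Gt along s3
  have hGtdiff : ∀ x u : ℝ, Gt (x - u) = Gt (-u) + ∫ t in (0:ℝ)..x, gt (t - u) := by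
    intro x u
    rw [intervalIntegral.integral_comp_sub_right, zero_sub]
    show a + _ = (a + _) + _
    rw [← intervalIntegral.integral_interval_sub_left (hgtint 0 (x - u)) (hgtint 0 (-u))]
    ring
  have hbackG3 : ∀ x : ℝ, Tendsto (fun k => Gt (x - s3 k)) atTop (nhds (G x + c)) := by
    intro x
    have h1 : ∀ k, Gt (x - s3 k) = Gt (-(s3 k)) + ∫ t in (0:ℝ)..x, gt (t - s3 k) :=
      fun k => hGtdiff x (s3 k)
    simp_rw [h1]
    have h2 : Tendsto (fun k => ∫ t in (0:ℝ)..x, gt (t - s3 k)) atTop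
        (nhds (∫ t in (0:ℝ)..x, g t)) := by
      refine aux_tendsto_intervalIntegral (C := Cf * Iφ)
        (fun k => (hgtmeas.comp (by fun_prop)).aestronglyMeasurable)
        (fun k t => hgtbd _) (fun t => ?_) 0 x
      exact (hback t).comp ((hσ2.comp hσ3).tendsto_atTop)
    have h3 : G x + c = b + ∫ t in (0:ℝ)..x, g t := by
      rw [hcdef, keyG x]; ring
    rw [h3]
    exact hb3.add h2
  have hforG3 : ∀ x : ℝ, Tendsto (fun k => G (x + s3 k)) atTop (nhds (Gt x)) :=
    fun x => (hforG2 x).comp (hσ3.tendsto_atTop)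
  -- the iteration argument: c = 0
  have hiter : ∀ n : ℕ, ∀ x : ℝ, ‖G x + (n : ℂ) * c‖ ≤ CF * Iφ := by
    intro n
    induction n with
    | zero => intro x; simpa using hGbd x
    | succ n ih =>
      have hGt : ∀ x : ℝ, ‖Gt x + (n : ℂ) * c‖ ≤ CF * Iφ := by
        intro x
        have h0 : Tendsto (fun k => G (x + s3 k) + (n : ℂ) * c) atTop
            (nhds (Gt x + (n : ℂ) * c)) := (hforG3 x).add tendsto_const_nhds
        exact le_of_tendsto h0.norm
          (Filter.Eventually.of_forall fun k => ih (x + s3 k))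
      intro x
      have hlim : Tendsto (fun k => Gt (x - s3 k) + (n : ℂ) * c) atTop
          (nhds (G x + ((n : ℕ) + 1 : ℂ) * c)) := by
        have := (hbackG3 x).add (tendsto_const_nhds (x := (n : ℂ) * c))
        convert this using 2
        ring
      have := le_of_tendsto hlim.norm
        (Filter.Eventually.of_forall fun k => hGt (x - s3 k))
      convert this using 3
      · rfl
      · rfl
      · push_cast
        ring
  have hc : c = 0 := by
    by_contra hc0
    have hcpos : 0 < ‖c‖ := norm_pos_iff.2 hc0
    obtain ⟨n, hn⟩ := exists_nat_gt ((CF * Iφ + ‖G 0‖) / ‖c‖)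
    have h1 : (n : ℝ) * ‖c‖ ≤ CF * Iφ + ‖G 0‖ := by
      have h2 := hiter n 0
      calc (n : ℝ) * ‖c‖ = ‖(n : ℂ) * c‖ := by
            rw [norm_mul, Complex.norm_natCast]
      _ = ‖(G 0 + (n : ℂ) * c) - G 0‖ := by ring_nf
      _ ≤ ‖G 0 + (n : ℂ) * c‖ + ‖G 0‖ := norm_sub_le _ _
      _ ≤ CF * Iφ + ‖G 0‖ := by linarith
    rw [div_lt_iff₀ hcpos] at hn
    linarith
  -- conclude
  refine ⟨fun k => σ1 (σ2 (σ3 k)), hσ1.comp (hσ2.comp hσ3), Gt, fun x => hforG3 x, fun x => ?_⟩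
  have := hbackG3 x
  rw [hc, add_zero] at this
  exact this
end

section
/- Let L_h be the linear difference-differential operator L_h f = Σ_{i=0}^p Σ_{j=0}^q a_{ij} f^{(i)}(· + h_j), where a_{ij} ∈ ℂ and h_0, …, h_q ∈ ℝ. Assume that every function f : ℝ → ℂ of class C^p whose derivatives f^{(j)}, 0 ≤ j ≤ p, are all uniformly continuous and bounded on ℝ and which satisfies L_h f = 0 is almost automorphic. Then every infinitely differentiable function f : ℝ → ℂ with all derivatives bounded on ℝ satisfying L_h f = g, where g : ℝ → ℂ is a continuous almost automorphic function, is almost automorphic. -/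
open Filter MeasureTheory

section Helpers
open Topology
/-- Sequential compactness extraction for a countable family of bounded Lipschitz functions. -/
lemma extract_lemma (u : ℕ → ℝ → ℂ) (t : ℕ → ℝ) (C : ℕ → ℝ) (K : ℕ → NNReal)
    (hb : ∀ n x, ‖u n x‖ ≤ C n) (hK : ∀ n, LipschitzWith (K n) (u n)) :
    ∃ σ : ℕ → ℕ, StrictMono σ ∧ ∃ v : ℕ → ℝ → ℂ,
      ∀ n x, Tendsto (fun k => u n (x + t (σ k))) atTop (𝓝 (v n x)) := by
  set S : Set ((ℕ × ℚ) → ℂ) := Set.univ.pi fun p => Metric.closedBall 0 (C p.1) with hSdef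
  have hS : IsCompact S := isCompact_univ_pi fun p => isCompact_closedBall _ _
  set X : ℕ → (ℕ × ℚ) → ℂ := fun k p => u p.1 ((p.2 : ℝ) + t k) with hXdef
  have hX : ∀ k, X k ∈ S := by
    intro k
    rw [hSdef, Set.mem_univ_pi]
    intro p
    simpa [Metric.mem_closedBall, dist_zero_right] using hb p.1 ((p.2 : ℝ) + t k)
  obtain ⟨ℓ, -, σ, hσ, hconv⟩ := hS.tendsto_subseq hX
  have hcoord : ∀ n : ℕ, ∀ q : ℚ,
      Tendsto (fun k => u n ((q : ℝ) + t (σ k))) atTop (𝓝 (ℓ (n, q))) := by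
    intro n q
    exact (tendsto_pi_nhds.1 hconv) (n, q)
  have key : ∀ n x, ∃ c, Tendsto (fun k => u n (x + t (σ k))) atTop (𝓝 c) := by
    intro n x
    apply cauchySeq_tendsto_of_complete
    rw [Metric.cauchySeq_iff]
    intro ε hε
    have hδ : (0:ℝ) < ε / (3 * ((K n : ℝ) + 1)) := by positivity
    obtain ⟨q, hq⟩ := exists_rat_near x hδ
    have hc := (hcoord n q).cauchySeq
    rw [Metric.cauchySeq_iff] at hc
    obtain ⟨N, hN⟩ := hc (ε/3) (by positivity)
    refine ⟨N, fun m hm k hk => ?_⟩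
    have hside : ∀ j : ℕ, dist (u n (x + t (σ j))) (u n ((q:ℝ) + t (σ j))) ≤ ε/3 := by
      intro j
      have h1 := (hK n).dist_le_mul (x + t (σ j)) ((q:ℝ) + t (σ j))
      have h2 : dist (x + t (σ j)) ((q:ℝ) + t (σ j)) = |x - (q:ℝ)| := by
        rw [Real.dist_eq]; ring_nf
      rw [h2] at h1
      have hKnn : (0:ℝ) ≤ (K n : ℝ) := (K n).coe_nonneg
      have : (K n : ℝ) * |x - (q:ℝ)| ≤ (K n : ℝ) * (ε / (3 * ((K n : ℝ) + 1))) :=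
        mul_le_mul_of_nonneg_left hq.le hKnn
      refine h1.trans (this.trans ?_)
      have h3 : (0:ℝ) < 3 * ((K n:ℝ) + 1) := by positivity
      rw [mul_div_assoc', div_le_div_iff₀ h3 (by norm_num : (0:ℝ) < 3)]
      nlinarith [(K n).coe_nonneg, hε.le, mul_nonneg (K n).coe_nonneg hε.le]
    have hmid := hN m hm k hk
    calc dist (u n (x + t (σ m))) (u n (x + t (σ k)))
        ≤ dist (u n (x + t (σ m))) (u n ((q:ℝ) + t (σ m)))
          + dist (u n ((q:ℝ) + t (σ m))) (u n ((q:ℝ) + t (σ k)))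
          + dist (u n ((q:ℝ) + t (σ k))) (u n (x + t (σ k))) := dist_triangle4 _ _ _ _
      _ < ε := by
          have := hside m
          have h2 := hside k
          rw [dist_comm (u n ((q:ℝ) + t (σ k)))] at *
          linarith
  choose v hv using key
  exact ⟨σ, hσ, v, hv⟩

lemma limit_bound {c : ℕ → ℂ} {l : ℂ} {C : ℝ} (h : Tendsto c atTop (𝓝 l))
    (hb : ∀ k, ‖c k‖ ≤ C) : ‖l‖ ≤ C :=
  le_of_tendsto (h.norm) (Eventually.of_forall hb)

lemma limit_lipschitz {u v : ℝ → ℂ} {t : ℕ → ℝ} {K : NNReal}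
    (hu : LipschitzWith K u)
    (hv : ∀ x, Tendsto (fun k => u (x + t k)) atTop (𝓝 (v x))) :
    LipschitzWith K v := by
  apply LipschitzWith.of_dist_le_mul
  intro x y
  have hd : Tendsto (fun k => dist (u (x + t k)) (u (y + t k))) atTop
      (𝓝 (dist (v x) (v y))) := (hv x).dist (hv y)
  refine le_of_tendsto hd (Eventually.of_forall fun k => ?_)
  have := hu.dist_le_mul (x + t k) (y + t k)
  have h2 : dist (x + t k) (y + t k) = dist x y := by
    rw [Real.dist_eq, Real.dist_eq]; congr 1; ring
  rwa [h2] at this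

/-- the derivative passes to pointwise limits of translates -/
lemma limit_hasDerivAt {a b A B : ℝ → ℂ} {t : ℕ → ℝ} {C : ℝ}
    (hd : ∀ x, HasDerivAt a (b x) x) (hbc : Continuous b) (hbb : ∀ x, ‖b x‖ ≤ C)
    (ha : ∀ x, Tendsto (fun k => a (x + t k)) atTop (𝓝 (A x)))
    (hb : ∀ x, Tendsto (fun k => b (x + t k)) atTop (𝓝 (B x)))
    (hBc : Continuous B) : ∀ x, HasDerivAt A (B x) x := by
  have hrep : ∀ x, A x = A 0 + ∫ s in (0:ℝ)..x, B s := by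
    intro x
    have hfk : ∀ k, a (x + t k) = a (0 + t k) + ∫ s in (0:ℝ)..x, b (s + t k) := by
      intro k
      have hder : ∀ s ∈ Set.uIcc (0:ℝ) x, HasDerivAt (fun y => a (y + t k)) (b (s + t k)) s := by
        intro s _
        have h1 : HasDerivAt (fun y : ℝ => y + t k) 1 s := (hasDerivAt_id s).add_const _
        have := (hd (s + t k)).scomp s h1
        rw [one_smul] at this
        exact this
      have hint : IntervalIntegrable (fun s => b (s + t k)) volume 0 x :=
        (hbc.comp (continuous_id.add continuous_const)).intervalIntegrable _ _
      have := intervalIntegral.integral_eq_sub_of_hasDerivAt hder hint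
      rw [this]; ring
    have hlim2 : Tendsto (fun k => ∫ s in (0:ℝ)..x, b (s + t k)) atTop
        (𝓝 (∫ s in (0:ℝ)..x, B s)) := by
      apply intervalIntegral.tendsto_integral_filter_of_dominated_convergence
        (fun _ => C)
      · exact Eventually.of_forall fun k =>
          ((hbc.comp (continuous_id.add continuous_const)).aestronglyMeasurable)
      · exact Eventually.of_forall fun k =>
          (ae_of_all _ fun s _ => hbb (s + t k))
      · exact intervalIntegrable_const
      · exact ae_of_all _ fun s _ => hb s
    have hlimL : Tendsto (fun k => a (x + t k)) atTop (𝓝 (A 0 + ∫ s in (0:ℝ)..x, B s)) := by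
      have : Tendsto (fun k => a (0 + t k) + ∫ s in (0:ℝ)..x, b (s + t k)) atTop
          (𝓝 (A 0 + ∫ s in (0:ℝ)..x, B s)) := (ha 0).add hlim2
      simpa only [← hfk] using this
    exact tendsto_nhds_unique (ha x) hlimL
  intro x
  have hder : HasDerivAt (fun y => A 0 + ∫ s in (0:ℝ)..y, B s) (B x) x := by
    apply HasDerivAt.const_add
    exact intervalIntegral.integral_hasDerivAt_right (hBc.intervalIntegrable _ _)
      hBc.aestronglyMeasurable.stronglyMeasurableAtFilter hBc.continuousAt
  have : A = fun y => A 0 + ∫ s in (0:ℝ)..y, B s := funext hrep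
  rw [this]
  exact hder

/-- derivative-system lemma: iterated derivatives and smoothness from a chain of HasDerivAt -/
lemma system_lemma (v : ℕ → ℝ → ℂ) (hc : ∀ i, Continuous (v i))
    (hd : ∀ i x, HasDerivAt (v i) (v (i+1) x) x) :
    (∀ n i, iteratedDeriv n (v i) = v (i + n)) ∧ (∀ (n : ℕ) (i : ℕ), ContDiff ℝ n (v i)) := by
  have hderiv : ∀ i, deriv (v i) = v (i+1) := fun i => funext fun x => (hd i x).deriv
  constructor
  · intro n
    induction n with
    | zero => intro i; simp [iteratedDeriv_zero]
    | succ n ih =>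
      intro i
      rw [iteratedDeriv_succ, ih i, hderiv]
      ring_nf
  · intro n
    induction n with
    | zero => intro i; simpa [contDiff_zero] using hc i
    | succ n ih =>
      intro i
      rw [Nat.cast_succ, contDiff_succ_iff_deriv]
      refine ⟨fun x => (hd i x).differentiableAt, ⟨fun htop => absurd htop ?_, ?_⟩⟩
      · exact_mod_cast WithTop.natCast_ne_top n
      · rw [hderiv]; exact ih (i+1)

/-- stability: for an almost automorphic function, any subsequence along which the double
limits exist returns the function. -/
lemma aa_stable {φ Φ Ψ : ℝ → ℂ}
    (hφ : Continuous φ ∧ ∀ s : ℕ → ℝ, ∃ σ : ℕ → ℕ, StrictMono σ ∧ ∃ g : ℝ → ℂ,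
      (∀ x : ℝ, Tendsto (fun k => φ (x + s (σ k))) atTop (nhds (g x))) ∧
      (∀ x : ℝ, Tendsto (fun k => g (x - s (σ k))) atTop (nhds (φ x))))
    (t : ℕ → ℝ)
    (h1 : ∀ x, Tendsto (fun k => φ (x + t k)) atTop (𝓝 (Φ x)))
    (h2 : ∀ x, Tendsto (fun k => Φ (x - t k)) atTop (𝓝 (Ψ x))) :
    ∀ x, Ψ x = φ x := by
  obtain ⟨ρ, hρ, g, hg1, hg2⟩ := hφ.2 t
  have hgΦ : ∀ x, g x = Φ x := fun x =>
    tendsto_nhds_unique (hg1 x) ((h1 x).comp hρ.tendsto_atTop)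
  intro x
  have hΦback : Tendsto (fun k => Φ (x - t (ρ k))) atTop (𝓝 (φ x)) := by
    have := hg2 x
    simpa only [hgΦ] using this
  exact tendsto_nhds_unique ((h2 x).comp hρ.tendsto_atTop) hΦback

lemma lip_aux {a b : ℝ → ℂ} {C : ℝ} (hd : ∀ x, HasDerivAt a (b x) x)
    (hb : ∀ x, ‖b x‖ ≤ C) : LipschitzWith C.toNNReal a := by
  apply lipschitzWith_of_nnnorm_deriv_le (fun x => (hd x).differentiableAt)
  intro x
  rw [(hd x).deriv, ← norm_toNNReal]
  exact Real.toNNReal_le_toNNReal (hb x)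

lemma tendsto_subidx {α : Type*} {c : ℕ → α} [TopologicalSpace α] {l : α}
    (h : Tendsto c atTop (𝓝 l)) {ρ : ℕ → ℕ} (hρ : StrictMono ρ) :
    Tendsto (fun k => c (ρ k)) atTop (𝓝 l) := h.comp hρ.tendsto_atTop

theorem almostAutomorphic_differenceDifferential' (p q : ℕ)
    (a : Fin (p + 1) → Fin (q + 1) → ℂ) (h : Fin (q + 1) → ℝ)
    (hhom : ∀ f : ℝ → ℂ, ContDiff ℝ p f →
      (∀ j : ℕ, j ≤ p → UniformContinuous (iteratedDeriv j f) ∧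
        ∃ C : ℝ, ∀ x : ℝ, ‖iteratedDeriv j f x‖ ≤ C) →
      (∀ x : ℝ, ∑ i : Fin (p + 1), ∑ j : Fin (q + 1),
        a i j * iteratedDeriv (i : ℕ) f (x + h j) = 0) →
      (Continuous f ∧ ∀ s : ℕ → ℝ, ∃ σ : ℕ → ℕ, StrictMono σ ∧ ∃ g : ℝ → ℂ,
        (∀ x : ℝ, Tendsto (fun k => f (x + s (σ k))) atTop (nhds (g x))) ∧
        (∀ x : ℝ, Tendsto (fun k => g (x - s (σ k))) atTop (nhds (f x))))) :
    ∀ f g : ℝ → ℂ, ContDiff ℝ (⊤ : ℕ∞) f →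
      (∀ i : ℕ, ∃ C : ℝ, ∀ x : ℝ, ‖iteratedDeriv i f x‖ ≤ C) →
      Continuous g →
      (Continuous g ∧ ∀ s : ℕ → ℝ, ∃ σ : ℕ → ℕ, StrictMono σ ∧ ∃ g' : ℝ → ℂ,
        (∀ x : ℝ, Tendsto (fun k => g (x + s (σ k))) atTop (nhds (g' x))) ∧
        (∀ x : ℝ, Tendsto (fun k => g' (x - s (σ k))) atTop (nhds (g x)))) →
      (∀ x : ℝ, ∑ i : Fin (p + 1), ∑ j : Fin (q + 1),
        a i j * iteratedDeriv (i : ℕ) f (x + h j) = g x) →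
      (Continuous f ∧ ∀ s : ℕ → ℝ, ∃ σ : ℕ → ℕ, StrictMono σ ∧ ∃ g' : ℝ → ℂ,
        (∀ x : ℝ, Tendsto (fun k => f (x + s (σ k))) atTop (nhds (g' x))) ∧
        (∀ x : ℝ, Tendsto (fun k => g' (x - s (σ k))) atTop (nhds (f x)))) := by
  intro f g hf hCf hgc hgaa hLf
  obtain ⟨C, hC⟩ : ∃ C : ℕ → ℝ, ∀ i x, ‖iteratedDeriv i f x‖ ≤ C i := by
    choose C hC using hCf; exact ⟨C, hC⟩
  set Df : ℕ → ℝ → ℂ := fun i => iteratedDeriv i f with hDfdef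
  have hDf_deriv : ∀ i x, HasDerivAt (Df i) (Df (i+1) x) x := by
    intro i x
    have hdiff : Differentiable ℝ (iteratedDeriv i f) := by
      apply hf.differentiable_iteratedDeriv
      exact_mod_cast ENat.coe_lt_top i
    have h1 := (hdiff x).hasDerivAt
    have h2 : Df (i+1) x = deriv (iteratedDeriv i f) x := by
      show iteratedDeriv (i+1) f x = _
      rw [iteratedDeriv_succ]
    rw [h2]
    exact h1
  have hDf_cont : ∀ i, Continuous (Df i) :=
    fun i => Differentiable.continuous (fun x => (hDf_deriv i x).differentiableAt)
  have hDf_lip : ∀ i, LipschitzWith ((C (i+1)).toNNReal) (Df i) :=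
    fun i => lip_aux (hDf_deriv i) (fun x => hC (i+1) x)
  refine ⟨hf.continuous, ?_⟩
  intro s
  -- Step 1: extract for g
  obtain ⟨ρg, hρg, gt, hgt1, hgt2⟩ := hgaa.2 s
  -- Step 2: forward extraction for f's derivatives
  obtain ⟨σa, hσa, F, hF⟩ := extract_lemma Df (fun k => s (ρg k)) C
    (fun i => (C (i+1)).toNNReal) hC hDf_lip
  have hFb : ∀ i x, ‖F i x‖ ≤ C i := fun i x => limit_bound (hF i x) (fun k => hC i _)
  have hFlip : ∀ i, LipschitzWith ((C (i+1)).toNNReal) (F i) :=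
    fun i => limit_lipschitz (hDf_lip i) (hF i)
  have hFd : ∀ i x, HasDerivAt (F i) (F (i+1) x) x := fun i =>
    limit_hasDerivAt (hDf_deriv i) (hDf_cont (i+1)) (fun x => hC (i+1) x)
      (hF i) (hF (i+1)) (hFlip (i+1)).continuous
  -- Step 3: backward extraction for F
  obtain ⟨σb, hσb, G, hG⟩ := extract_lemma F (fun k => -(s (ρg (σa k)))) C
    (fun i => (C (i+1)).toNNReal) hFb hFlip
  have hGb : ∀ i x, ‖G i x‖ ≤ C i := fun i x => limit_bound (hG i x) (fun k => hFb i _)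
  have hGlip : ∀ i, LipschitzWith ((C (i+1)).toNNReal) (G i) :=
    fun i => limit_lipschitz (hFlip i) (hG i)
  have hGd : ∀ i x, HasDerivAt (G i) (G (i+1) x) x := fun i =>
    limit_hasDerivAt (hFd i) (hFlip (i+1)).continuous (fun x => hFb (i+1) x)
      (hG i) (hG (i+1)) (hGlip (i+1)).continuous
  -- Step 4: identify gt and backward equation
  have hgtF : ∀ x, gt x = ∑ i : Fin (p+1), ∑ j : Fin (q+1), a i j * F (i:ℕ) (x + h j) := by
    intro x
    have h1 : Tendsto (fun k => g (x + s (ρg (σa k)))) atTop (𝓝 (gt x)) :=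
      tendsto_subidx (hgt1 x) hσa
    have h2 : Tendsto (fun k => g (x + s (ρg (σa k)))) atTop
        (𝓝 (∑ i : Fin (p+1), ∑ j : Fin (q+1), a i j * F (i:ℕ) (x + h j))) := by
      have heq : ∀ k, g (x + s (ρg (σa k))) =
          ∑ i : Fin (p+1), ∑ j : Fin (q+1), a i j * Df (i:ℕ) ((x + h j) + s (ρg (σa k))) := by
        intro k
        rw [← hLf (x + s (ρg (σa k)))]
        congr 1; funext i; congr 1; funext j; congr 2; ring
      simp only [heq]
      apply tendsto_finset_sum; intro i _
      apply tendsto_finset_sum; intro j _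
      exact (hF (i:ℕ) (x + h j)).const_mul (a i j)
    exact tendsto_nhds_unique h1 h2
  have hgB : ∀ x, ∑ i : Fin (p+1), ∑ j : Fin (q+1), a i j * G (i:ℕ) (x + h j) = g x := by
    intro x
    have h1 : Tendsto (fun k => gt (x + -(s (ρg (σa (σb k)))))) atTop (𝓝 (g x)) := by
      have := tendsto_subidx (hgt2 x) (hσa.comp hσb)
      simpa [sub_eq_add_neg] using this
    have h2 : Tendsto (fun k => gt (x + -(s (ρg (σa (σb k)))))) atTop
        (𝓝 (∑ i : Fin (p+1), ∑ j : Fin (q+1), a i j * G (i:ℕ) (x + h j))) := by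
      have heq : ∀ k, gt (x + -(s (ρg (σa (σb k))))) =
          ∑ i : Fin (p+1), ∑ j : Fin (q+1),
            a i j * F (i:ℕ) ((x + h j) + -(s (ρg (σa (σb k))))) := by
        intro k
        rw [hgtF (x + -(s (ρg (σa (σb k)))))]
        congr 1; funext i; congr 1; funext j; congr 2; ring
      simp only [heq]
      apply tendsto_finset_sum; intro i _
      apply tendsto_finset_sum; intro j _
      exact (hG (i:ℕ) (x + h j)).const_mul (a i j)
    exact tendsto_nhds_unique h2 h1
  -- Step 5: the defect u
  set U : ℕ → ℝ → ℂ := fun i x => G i x - Df i x with hUdef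
  have hUd : ∀ i x, HasDerivAt (U i) (U (i+1) x) x := fun i x =>
    (hGd i x).sub (hDf_deriv i x)
  have hUc : ∀ i, Continuous (U i) := fun i => ((hGlip i).continuous).sub (hDf_cont i)
  have hUb : ∀ i x, ‖U i x‖ ≤ C i + C i := fun i x =>
    (norm_sub_le _ _).trans (add_le_add (hGb i x) (hC i x))
  have hUlip : ∀ i, LipschitzWith ((C (i+1) + C (i+1)).toNNReal) (U i) :=
    fun i => lip_aux (hUd i) (fun x => hUb (i+1) x)
  obtain ⟨hU_it, hU_cd⟩ := system_lemma U hUc hUd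
  have hU_it0 : ∀ n : ℕ, iteratedDeriv n (U 0) = U n := by
    intro n; rw [hU_it n 0, Nat.zero_add]
  -- Step 6: U 0 is almost automorphic via hhom
  have hUaa := hhom (U 0) (hU_cd p 0)
    (by
      intro j hj
      rw [hU_it0 j]
      exact ⟨(hUlip j).uniformContinuous, ⟨C j + C j, fun x => hUb j x⟩⟩)
    (by
      intro x
      have : ∀ (i : Fin (p+1)) (j : Fin (q+1)),
          a i j * iteratedDeriv (i:ℕ) (U 0) (x + h j)
          = a i j * G (i:ℕ) (x + h j) - a i j * Df (i:ℕ) (x + h j) := by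
        intro i j
        rw [hU_it0 (i:ℕ)]
        simp only [hUdef]
        ring
      simp only [this, Finset.sum_sub_distrib]
      rw [hgB x, hLf x]
      ring)
  -- Step 7: forward extraction for U
  obtain ⟨σc, hσc, W, hW⟩ := extract_lemma U (fun k => s (ρg (σa (σb k))))
    (fun i => C i + C i) (fun i => (C (i+1) + C (i+1)).toNNReal) hUb hUlip
  have hWb' : ∀ i x, ‖W i x‖ ≤ C i + C i := fun i x => limit_bound (hW i x) (fun k => hUb i _)
  have hWlip : ∀ i, LipschitzWith ((C (i+1) + C (i+1)).toNNReal) (W i) :=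
    fun i => limit_lipschitz (hUlip i) (hW i)
  have hWd : ∀ i x, HasDerivAt (W i) (W (i+1) x) x := fun i =>
    limit_hasDerivAt (hUd i) (hUc (i+1)) (fun x => hUb (i+1) x)
      (hW i) (hW (i+1)) (hWlip (i+1)).continuous
  -- Step 8: backward extraction for W
  obtain ⟨σd, hσd, Wb, hWb⟩ := extract_lemma W (fun k => -(s (ρg (σa (σb (σc k))))))
    (fun i => C i + C i) (fun i => (C (i+1) + C (i+1)).toNNReal) hWb' hWlip
  have hWbd : ∀ i x, HasDerivAt (Wb i) (Wb (i+1) x) x := fun i =>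
    limit_hasDerivAt (hWd i) (hWlip (i+1)).continuous (fun x => hWb' (i+1) x)
      (hWb i) (hWb (i+1)) (limit_lipschitz (hWlip (i+1)) (hWb (i+1))).continuous
  -- Step 9: stability gives Wb 0 = U 0
  have hWb0 : ∀ x, Wb 0 x = U 0 x := by
    apply aa_stable hUaa (fun k => s (ρg (σa (σb (σc (σd k))))))
    · intro x
      exact tendsto_subidx (hW 0 x) hσd
    · intro x
      have := hWb 0 x
      simpa [sub_eq_add_neg] using this
  have hWb_eq : ∀ i, Wb i = U i := by
    intro i
    induction i with
    | zero => exact funext hWb0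
    | succ i ih =>
      funext x
      have h1 : HasDerivAt (U i) (Wb (i+1) x) x := by rw [← ih]; exact hWbd i x
      exact h1.unique (hUd i x)
  -- Step 10: iteration bound
  have Q : ∀ n : ℕ, ∀ i x, ‖Df i x + (n:ℂ) * U i x‖ ≤ C i := by
    intro n
    induction n with
    | zero => intro i x; simpa using hC i x
    | succ n ih =>
      intro i y
      have fwd : ∀ z, Tendsto
          (fun k => Df i (z + s (ρg (σa (σb (σc (σd k)))))) +
            (n:ℂ) * U i (z + s (ρg (σa (σb (σc (σd k))))))) atTop
          (𝓝 (F i z + (n:ℂ) * W i z)) := by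
        intro z
        exact (tendsto_subidx (hF i z) (hσb.comp (hσc.comp hσd))).add
          ((tendsto_subidx (hW i z) hσd).const_mul (n:ℂ))
      have hb1 : ∀ z, ‖F i z + (n:ℂ) * W i z‖ ≤ C i := by
        intro z
        exact le_of_tendsto (fwd z).norm (Eventually.of_forall fun k => ih i _)
      have bwd : Tendsto
          (fun k => F i (y + -(s (ρg (σa (σb (σc (σd k))))))) +
            (n:ℂ) * W i (y + -(s (ρg (σa (σb (σc (σd k)))))))) atTop
          (𝓝 (G i y + (n:ℂ) * Wb i y)) := by
        exact (tendsto_subidx (hG i y) (hσc.comp hσd)).add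
          ((hWb i y).const_mul (n:ℂ))
      have hfinal : ‖G i y + (n:ℂ) * Wb i y‖ ≤ C i :=
        le_of_tendsto bwd.norm (Eventually.of_forall fun k => hb1 _)
      have hGeq : G i y = Df i y + U i y := by simp only [hUdef]; ring
      rw [hGeq, hWb_eq i] at hfinal
      calc ‖Df i y + ((n+1:ℕ):ℂ) * U i y‖
          = ‖Df i y + U i y + (n:ℂ) * U i y‖ := by congr 1; push_cast; ring
        _ ≤ C i := hfinal
  -- Step 11: U 0 = 0
  have hU0 : ∀ x, U 0 x = 0 := by
    intro x
    by_contra hne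
    have hpos : 0 < ‖U 0 x‖ := norm_pos_iff.2 hne
    obtain ⟨n, hn⟩ := exists_nat_gt ((C 0 + C 0) / ‖U 0 x‖)
    have h1 : ‖(n:ℂ) * U 0 x‖ ≤ ‖Df 0 x + (n:ℂ) * U 0 x‖ + ‖Df 0 x‖ := by
      calc ‖(n:ℂ) * U 0 x‖ = ‖(Df 0 x + (n:ℂ) * U 0 x) - Df 0 x‖ := by congr 1; ring
        _ ≤ _ := norm_sub_le _ _
    have h2 : ‖(n:ℂ) * U 0 x‖ = (n:ℝ) * ‖U 0 x‖ := by
      rw [norm_mul, Complex.norm_natCast]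
    have h3 : (n:ℝ) * ‖U 0 x‖ ≤ C 0 + C 0 := by
      rw [← h2]
      exact h1.trans (add_le_add (Q n 0 x) (hC 0 x))
    rw [div_lt_iff₀ hpos] at hn
    linarith
  -- Step 12: conclusion
  refine ⟨fun k => ρg (σa (σb (σc (σd k)))),
    hρg.comp (hσa.comp (hσb.comp (hσc.comp hσd))), F 0, ?_, ?_⟩
  · intro x
    have := tendsto_subidx (hF 0 x) (hσb.comp (hσc.comp hσd))
    have hDf0 : Df 0 = f := iteratedDeriv_zero
    rw [← hDf0]
    exact this
  · intro x
    have h1 : Tendsto (fun k => F 0 (x - s (ρg (σa (σb (σc (σd k))))))) atTop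
        (𝓝 (G 0 x)) := by
      have := tendsto_subidx (hG 0 x) (hσc.comp hσd)
      simpa [sub_eq_add_neg] using this
    have hG0x : G 0 x = f x := by
      have h3 : G 0 x = Df 0 x := sub_eq_zero.mp (hU0 x)
      have hDf0 : Df 0 x = f x := by
        show iteratedDeriv 0 f x = f x
        rw [iteratedDeriv_zero]
      rw [h3, hDf0]
    rw [← hG0x]
    exact h1

end Helpers

/-- If every bounded uniformly continuous (with derivatives up to order p) solution of the
homogeneous linear difference-differential equation is almost automorphic, then every smooth
function with all derivatives bounded solving the inhomogeneous equation with continuous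
almost automorphic right-hand side is almost automorphic. -/
theorem almostAutomorphic_differenceDifferential (p q : ℕ)
    (a : Fin (p + 1) → Fin (q + 1) → ℂ) (h : Fin (q + 1) → ℝ)
    (hhom : ∀ f : ℝ → ℂ, ContDiff ℝ p f →
      (∀ j : ℕ, j ≤ p → UniformContinuous (iteratedDeriv j f) ∧
        ∃ C : ℝ, ∀ x : ℝ, ‖iteratedDeriv j f x‖ ≤ C) →
      (∀ x : ℝ, ∑ i : Fin (p + 1), ∑ j : Fin (q + 1),
        a i j * iteratedDeriv (i : ℕ) f (x + h j) = 0) →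
      AlmostAutomorphic f) :
    ∀ f g : ℝ → ℂ, ContDiff ℝ (⊤ : ℕ∞) f →
      (∀ i : ℕ, ∃ C : ℝ, ∀ x : ℝ, ‖iteratedDeriv i f x‖ ≤ C) →
      Continuous g → AlmostAutomorphic g →
      (∀ x : ℝ, ∑ i : Fin (p + 1), ∑ j : Fin (q + 1),
        a i j * iteratedDeriv (i : ℕ) f (x + h j) = g x) →
      AlmostAutomorphic f := by
  exact almostAutomorphic_differenceDifferential' p q a h hhom
end
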